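/- arXiv:1711.10404 — 5 statements merged into one kernel-verified Lean document; each statement's English description precedes it below -/
import Mathlib

section
/- Let D = {(x,y) ∈ ℝ×ℝ² : ‖y‖² ≥ x²} \ {(0,0)}, and let J ⊂ ℝ be the set of all t ∈ ℝ such that 6·c_b·e^{−λ|t|} < min(a₂₂, a₃₃). Define V : ℝ×ℝ² → ℝ by V(x,y) = ‖y‖² − x². Then V is a Lyapunov function for the linear system on J×D: for every solution z of z'(t) = (A + B(t))z(t), and every t ∈ J with z(t) ∈ D, the derivative of the function s ↦ V(z(s)) at s = t is strictly negative. -/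
/-!
Along a solution, `½ dV/dt = -(a₂₂ y₁² + a₃₃ y₂²) + (-x, y₁, y₂) ⬝ B(t) z`. The first term is at most
`-min(a₂₂, a₃₃) ‖y‖²`. Bounding the entries of `B(t)` by `ε = c_b e^{-λ|t|}`, the second is at most
`ε (|x| + |y₁| + |y₂|)² ≤ 3ε ‖z‖²`, which on the cone `x² ≤ ‖y‖²` is at most `6ε ‖y‖²`.
Since `y ≠ 0` on `D`, the derivative is negative as soon as `6ε < min(a₂₂, a₃₃)`.
-/

open Filter

/-- The constant matrix `A = diag(0, -a₂₂, -a₃₃)`. -/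
noncomputable def Amat (a22 a33 : ℝ) : Matrix (Fin 3) (Fin 3) ℝ :=
  Matrix.diagonal ![0, -a22, -a33]

open Matrix Finset

lemma abs_dotProduct_mulVec_le {m n : Type*} [Fintype m] [Fintype n] {M : Matrix m n ℝ} {ε : ℝ}
    (hM : ∀ i j, |M i j| ≤ ε) (u : m → ℝ) (v : n → ℝ) :
    |u ⬝ᵥ M *ᵥ v| ≤ ε * ((∑ i, |u i|) * ∑ j, |v j|) := by
  calc |u ⬝ᵥ M *ᵥ v| = |∑ i, ∑ j, u i * M i j * v j| := by
        simp only [dotProduct, mulVec, mul_sum, mul_assoc]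
    _ ≤ ∑ i, ∑ j, |u i| * ε * |v j| := by
        refine (abs_sum_le_sum_abs _ _).trans (sum_le_sum fun i _ => ?_)
        refine (abs_sum_le_sum_abs _ _).trans (sum_le_sum fun j _ => ?_)
        rw [abs_mul, abs_mul]
        gcongr
        exact hM i j
    _ = ε * ((∑ i, |u i|) * ∑ j, |v j|) := by
        rw [sum_mul_sum, mul_sum]
        exact sum_congr rfl fun i _ => by rw [mul_sum]; exact sum_congr rfl fun j _ => by ring

lemma sq_sum_abs_le_card_mul_sum_sq {ι : Type*} (s : Finset ι) (f : ι → ℝ) :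
    (∑ i ∈ s, |f i|) ^ 2 ≤ #s * ∑ i ∈ s, f i ^ 2 := by
  simpa only [sq_abs] using sq_sum_le_card_mul_sum_sq (s := s) (f := fun i => |f i|)

/-- `![-v 0, v 1, v 2]` is half the gradient of `V v = v 1 ^ 2 + v 2 ^ 2 - v 0 ^ 2`. -/
lemma hasDerivAt_sq_add_sq_sub_sq {z : ℝ → Fin 3 → ℝ} {w : Fin 3 → ℝ} {t : ℝ}
    (hz : HasDerivAt z w t) :
    HasDerivAt (fun s => z s 1 ^ 2 + z s 2 ^ 2 - z s 0 ^ 2)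
      (2 * (![-z t 0, z t 1, z t 2] ⬝ᵥ w)) t := by
  have hcomp := hasDerivAt_pi.mp hz
  refine ((((hcomp 1).fun_pow 2).fun_add ((hcomp 2).fun_pow 2)).fun_sub
    ((hcomp 0).fun_pow 2)).congr_deriv ?_
  simp only [dotProduct, Fin.sum_univ_three, cons_val_zero, cons_val_one, Matrix.cons_val]
  ring

lemma dotProduct_amat_add_mulVec (a22 a33 : ℝ) (M : Matrix (Fin 3) (Fin 3) ℝ) (v : Fin 3 → ℝ) :
    ![-v 0, v 1, v 2] ⬝ᵥ (Amat a22 a33 + M) *ᵥ v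
      = -(a22 * v 1 ^ 2 + a33 * v 2 ^ 2) + ![-v 0, v 1, v 2] ⬝ᵥ M *ᵥ v := by
  simp only [Amat, add_mulVec, Pi.add_apply, mulVec_diagonal, dotProduct, Fin.sum_univ_three,
    cons_val_zero, cons_val_one, Matrix.cons_val]
  ring

lemma sum_abs_sq_le_of_mem_cone {v : Fin 3 → ℝ} (hv : v 0 ^ 2 ≤ v 1 ^ 2 + v 2 ^ 2) :
    (∑ i, |v i|) ^ 2 ≤ 6 * (v 1 ^ 2 + v 2 ^ 2) := by
  have := sq_sum_abs_le_card_mul_sum_sq univ v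
  simp only [card_univ, Fintype.card_fin, Fin.sum_univ_three] at this ⊢
  norm_num at this
  linarith

lemma sum_sq_pos_of_mem_cone {v : Fin 3 → ℝ} (hv : v 0 ^ 2 ≤ v 1 ^ 2 + v 2 ^ 2) (h0 : v ≠ 0) :
    0 < v 1 ^ 2 + v 2 ^ 2 := by
  by_contra! h
  have h1 : v 1 = 0 := by nlinarith [sq_nonneg (v 1), sq_nonneg (v 2)]
  have h2 : v 2 = 0 := by nlinarith [sq_nonneg (v 1), sq_nonneg (v 2)]
  have h0' : v 0 = 0 := by nlinarith [sq_nonneg (v 0)]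
  exact h0 (funext fun i => by fin_cases i <;> assumption)

lemma dotProduct_amat_add_mulVec_neg {a22 a33 ε : ℝ} {M : Matrix (Fin 3) (Fin 3) ℝ}
    (hM : ∀ i j, |M i j| ≤ ε) (hε : 6 * ε < min a22 a33) {v : Fin 3 → ℝ}
    (hv : v 0 ^ 2 ≤ v 1 ^ 2 + v 2 ^ 2) (h0 : v ≠ 0) :
    ![-v 0, v 1, v 2] ⬝ᵥ (Amat a22 a33 + M) *ᵥ v < 0 := by
  have hq := sum_sq_pos_of_mem_cone hv h0
  have hε0 : 0 ≤ ε := (abs_nonneg _).trans (hM 0 0)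
  have hA : min a22 a33 * (v 1 ^ 2 + v 2 ^ 2) ≤ a22 * v 1 ^ 2 + a33 * v 2 ^ 2 := by
    rw [mul_add]
    gcongr
    exacts [min_le_left _ _, min_le_right _ _]
  have hB : ![-v 0, v 1, v 2] ⬝ᵥ M *ᵥ v ≤ 6 * ε * (v 1 ^ 2 + v 2 ^ 2) := calc
    _ ≤ ε * ((∑ i, |![-v 0, v 1, v 2] i|) * ∑ j, |v j|) :=
      (le_abs_self _).trans (abs_dotProduct_mulVec_le hM _ _)
    _ = ε * (∑ i, |v i|) ^ 2 := by simp [Fin.sum_univ_three, sq]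
    _ ≤ ε * (6 * (v 1 ^ 2 + v 2 ^ 2)) := by gcongr; exact sum_abs_sq_le_of_mem_cone hv
    _ = 6 * ε * (v 1 ^ 2 + v 2 ^ 2) := by ring
  rw [dotProduct_amat_add_mulVec]
  linarith [mul_lt_mul_of_pos_right hε hq]

theorem lyapunov_cone_general (a22 a33 cb lam : ℝ)
    (B : ℝ → Matrix (Fin 3) (Fin 3) ℝ)
    (hBbound : ∀ t : ℝ, ∀ i j : Fin 3, |B t i j| ≤ cb * Real.exp (-lam * |t|))
    (z : ℝ → Fin 3 → ℝ)
    (hz : ∀ t : ℝ, HasDerivAt z ((Amat a22 a33 + B t).mulVec (z t)) t)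
    (t : ℝ)
    (ht : 6 * cb * Real.exp (-lam * |t|) < min a22 a33)
    (hzD : (z t 0) ^ 2 ≤ (z t 1) ^ 2 + (z t 2) ^ 2 ∧ z t ≠ 0) :
    deriv (fun s => (z s 1) ^ 2 + (z s 2) ^ 2 - (z s 0) ^ 2) t < 0 := by
  rw [(hasDerivAt_sq_add_sq_sub_sq (hz t)).deriv]
  have hε : 6 * (cb * Real.exp (-lam * |t|)) < min a22 a33 := by rwa [← mul_assoc]
  have := dotProduct_amat_add_mulVec_neg (hBbound t) hε hzD.1 hzD.2
  linarith

/-- **Lemma (Lyapunov function on the cone `‖y‖² ≥ x²`).**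
Consider `z' = (A + B(t))z` on `ℝ × ℝ²` (coordinates `(x, y₁, y₂)`), where
`A = diag(0, -a₂₂, -a₃₃)` with `a₂₂, a₃₃ > 0` and the continuous matrix `B(t)` has entries
bounded by `c_b e^{-λ|t|}`.  Let `D = {‖y‖² ≥ x²} \ {0}` and let `t` satisfy
`6 c_b e^{-λ|t|} < min(a₂₂, a₃₃)`.  Then `V(x,y) = ‖y‖² - x²` is strictly decreasing along
any solution at such a time `t` with `z(t) ∈ D`. -/
theorem lyapunov_cone (a22 a33 cb lam : ℝ)
    (ha22 : 0 < a22) (ha33 : 0 < a33) (hcb : 0 < cb) (hlam : 0 < lam)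
    (B : ℝ → Matrix (Fin 3) (Fin 3) ℝ) (hBcont : Continuous B)
    (hBbound : ∀ t : ℝ, ∀ i j : Fin 3, |B t i j| ≤ cb * Real.exp (-lam * |t|))
    (z : ℝ → Fin 3 → ℝ)
    (hz : ∀ t : ℝ, HasDerivAt z ((Amat a22 a33 + B t).mulVec (z t)) t)
    (t : ℝ)
    (ht : 6 * cb * Real.exp (-lam * |t|) < min a22 a33)
    (hzD : (z t 0) ^ 2 ≤ (z t 1) ^ 2 + (z t 2) ^ 2 ∧ z t ≠ 0) :
    deriv (fun s => (z s 1) ^ 2 + (z s 2) ^ 2 - (z s 0) ^ 2) t < 0 :=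
  lyapunov_cone_general a22 a33 cb lam B hBbound z hz t ht hzD
end

section
/- Fix x** > 0, ρ > 0, r > 0 and t** > 0 such that 6·c_b·e^{−λ·t**} < min(a₂₂, a₃₃), 2·c_b·e^{−λ·t**}·(1 + (x** + 2ρ)/r) < min(a₂₂, a₃₃), and (1/λ)·c_b·e^{−λ·t**}·(x** + 2ρ + 2r) < ρ. Then for every point p** ∈ {x**} × B̄(0,r), the solution γ of γ'(t) = (A + B(t))γ(t) with γ(t**) = p** converges as t → +∞, and its limit has the form (x₊**, 0, 0) with x₊** ∈ [x** − ρ, x** + ρ]. -/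
/-!
Write `γ = (x, y)` with `y = (y₁, y₂)` and `ε(t) = c_b e^{-λt}`. As long as `γ` stays in the
cylinder `C = [x** - ρ, x** + ρ] × B̄(0, r)`, the perturbation `B(t)γ` has size at most
`ε(t) (x** + 2ρ + 2r)`. Hence `x` moves by less than `ρ` in total (third condition), while
`d/dt |y|² ≤ -2 (min(a₂₂, a₃₃) - 2ε) |y|² + 4 r (x** + ρ) ε`, which is negative on `|y| = r`
(second condition). A continuous induction keeps `γ` in `C` for all `t ≥ t**`. There `x'` is
integrable, so `x` converges, and the differential inequality for `|y|²`, with a positive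
damping rate, forces `|y|² → 0`.
-/

open Filter

/-- `γ` solves `γ' = (A + B(t))γ` on all of `ℝ`. -/
def IsLinSolution (a22 a33 : ℝ) (B : ℝ → Matrix (Fin 3) (Fin 3) ℝ)
    (γ : ℝ → Fin 3 → ℝ) : Prop :=
  ∀ t : ℝ, HasDerivAt γ ((Amat a22 a33 + B t).mulVec (γ t)) t

open Set Topology Real Matrix

theorem HasDerivAt.eventually_nhdsGT_lt {f : ℝ → ℝ} {f' x : ℝ} (hf : HasDerivAt f f' x)
    (hf' : f' < 0) : ∀ᶠ z in 𝓝[>] x, f z < f x := by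
  filter_upwards [hf.hasDerivWithinAt.limsup_slope_le' (lt_irrefl x) hf', self_mem_nhdsWithin]
    with z hz hxz
  rw [slope_def_field, div_neg_iff] at hz
  rcases hz with ⟨-, hz⟩ | ⟨hz, -⟩
  · exact absurd hz (not_lt.2 (sub_pos.2 hxz).le)
  · linarith

theorem abs_sub_le_of_abs_deriv_le_exp {f f' : ℝ → ℝ} {C lam a b : ℝ} (hlam : 0 < lam)
    (hab : a ≤ b) (hf : ∀ t ∈ Icc a b, HasDerivAt f (f' t) t)
    (hf' : ∀ t ∈ Icc a b, |f' t| ≤ C * exp (-lam * t)) :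
    |f b - f a| ≤ C * exp (-lam * a) / lam := by
  have hC : 0 ≤ C := nonneg_of_mul_nonneg_left ((abs_nonneg _).trans (hf' a ⟨le_rfl, hab⟩))
    (exp_pos _)
  have hB : ∀ t, HasDerivAt (fun t => C * (exp (-lam * a) - exp (-lam * t)) / lam)
      (C * exp (-lam * t)) t := fun t => by
    refine (((((hasDerivAt_id' t).const_mul (-lam)).exp).const_sub (exp (-lam * a))).const_mul C
      |>.div_const lam).congr_deriv ?_
    field_simp
  have := image_norm_le_of_norm_deriv_right_le_deriv_boundary (f := fun t => f t - f a)
    (fun t ht => ((hf t ht).sub_const (f a)).continuousAt.continuousWithinAt)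
    (fun t ht => ((hf t (Ico_subset_Icc_self ht)).sub_const (f a)).hasDerivWithinAt)
    (by simp) hB (fun t ht => hf' t (Ico_subset_Icc_self ht)) ⟨hab, le_rfl⟩
  refine this.trans ?_
  gcongr
  linarith [exp_pos (-lam * b)]

open MeasureTheory in
theorem exists_tendsto_of_abs_deriv_le_exp {f f' : ℝ → ℝ} {C lam a : ℝ} (hlam : 0 < lam)
    (hf : ∀ t ∈ Ici a, HasDerivAt f (f' t) t) (hf' : ∀ t ∈ Ici a, |f' t| ≤ C * exp (-lam * t)) :
    ∃ l, Tendsto f atTop (𝓝 l) := by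
  have hderiv : ∀ t ∈ Ioi a, HasDerivAt f (f' t) t := fun t ht => hf t (Ioi_subset_Ici_self ht)
  have hmeas : AEStronglyMeasurable f' (volume.restrict (Ioi a)) :=
    (measurable_deriv f).aestronglyMeasurable.congr <|
      (ae_restrict_mem measurableSet_Ioi).mono fun t ht => (hderiv t ht).deriv
  have hint : IntegrableOn f' (Ioi a) :=
    ((exp_neg_integrableOn_Ioi a hlam).const_mul C).mono' hmeas <|
      (ae_restrict_mem measurableSet_Ioi).mono fun t ht => hf' t (Ioi_subset_Ici_self ht)
  exact ⟨_, tendsto_limUnder_of_hasDerivAt_of_integrableOn_Ioi hderiv hint⟩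

theorem tendsto_zero_of_deriv_le_neg_mul_add_exp {g g' : ℝ → ℝ} {a κ K lam : ℝ} (hκ : 0 < κ)
    (hlam : 0 < lam) (hK : 0 ≤ K) (hg0 : ∀ t ∈ Ici a, 0 ≤ g t)
    (hg : ∀ t ∈ Ici a, HasDerivAt g (g' t) t)
    (hg' : ∀ t ∈ Ici a, g' t ≤ -κ * g t + K * exp (-lam * t)) :
    Tendsto g atTop (𝓝 0) := by
  obtain ⟨ν, hν, hνκ, hνlam⟩ : ∃ ν, 0 < ν ∧ ν ≤ κ ∧ ν < lam :=
    ⟨min κ lam / 2, by positivity, by linarith [min_le_left κ lam],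
      by linarith [min_le_right κ lam]⟩
  -- the second summand is chosen so that its derivative cancels the forcing term
  set F := fun t => exp (ν * t) * g t + K / (lam - ν) * exp ((ν - lam) * t)
  have hF : ∀ t ∈ Ici a,
      HasDerivAt F (exp (ν * t) * (g' t + ν * g t) - K * exp ((ν - lam) * t)) t := by
    intro t ht
    have h1 := (((hasDerivAt_id' t).const_mul ν).exp).mul (hg t ht)
    have h2 := (((hasDerivAt_id' t).const_mul (ν - lam)).exp).const_mul (K / (lam - ν))
    refine (h1.add h2).congr_deriv ?_
    field_simp [(sub_pos.2 hνlam).ne']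
    ring
  have hanti : AntitoneOn F (Ici a) := by
    refine antitoneOn_of_hasDerivWithinAt_nonpos (convex_Ici a)
      (fun t ht => (hF t ht).continuousAt.continuousWithinAt)
      (fun t ht => (hF t (interior_subset ht)).hasDerivWithinAt) fun t ht => ?_
    have ht := interior_subset ht
    have hexp : exp (ν * t) * exp (-lam * t) = exp ((ν - lam) * t) := by
      rw [← exp_add]; ring_nf
    calc exp (ν * t) * (g' t + ν * g t) - K * exp ((ν - lam) * t)
        ≤ exp (ν * t) * (-(κ - ν) * g t + K * exp (-lam * t)) - K * exp ((ν - lam) * t) := by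
          gcongr exp _ * ?_ - _; linarith [hg' t ht]
      _ = -((κ - ν) * (exp (ν * t) * g t)) := by rw [← hexp]; ring
      _ ≤ 0 := neg_nonpos.2 (by have := hg0 t ht; positivity)
  have hle : ∀ t ∈ Ici a, g t ≤ F a * exp (-ν * t) := by
    intro t ht
    have h := hanti self_mem_Ici ht ht
    have hcorr : 0 ≤ K / (lam - ν) * exp ((ν - lam) * t) := by
      have := sub_pos.2 hνlam; positivity
    have : exp (ν * t) * g t ≤ F a := by simp only [F] at h ⊢; linarith
    calc g t = exp (-ν * t) * (exp (ν * t) * g t) := by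
          rw [← mul_assoc, ← exp_add]; simp
      _ ≤ exp (-ν * t) * F a := by gcongr
      _ = F a * exp (-ν * t) := mul_comm _ _
  have hlim : Tendsto (fun t => F a * exp (-ν * t)) atTop (𝓝 0) := by
    simpa using (tendsto_exp_atBot.comp
      (tendsto_id.const_mul_atTop_of_neg (neg_neg_iff_pos.2 hν))).const_mul (F a)
  exact squeeze_zero' (eventually_atTop.2 ⟨a, hg0⟩) (eventually_atTop.2 ⟨a, hle⟩) hlim

theorem tendsto_zero_of_tendsto_sq_add_sq {α : Type*} {l : Filter α} {f g : α → ℝ}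
    (h : Tendsto (fun t => f t ^ 2 + g t ^ 2) l (𝓝 0)) : Tendsto f l (𝓝 0) := by
  refine squeeze_zero_norm (fun t => ?_) (by simpa using h.sqrt)
  rw [Real.norm_eq_abs, ← sqrt_sq_eq_abs]
  exact sqrt_le_sqrt (le_add_of_nonneg_right (sq_nonneg _))

theorem abs_mulVec_apply_le {m n : Type*} [Fintype n] {M : Matrix m n ℝ} {e : ℝ}
    (hM : ∀ i j, |M i j| ≤ e) (v : n → ℝ) (i : m) : |(M *ᵥ v) i| ≤ e * ∑ j, |v j| := by
  calc |(M *ᵥ v) i| = |∑ j, M i j * v j| := rfl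
    _ ≤ ∑ j, |M i j * v j| := Finset.abs_sum_le_sum_abs _ _
    _ ≤ ∑ j, e * |v j| := Finset.sum_le_sum fun j _ => by
        rw [abs_mul]; exact mul_le_mul_of_nonneg_right (hM i j) (abs_nonneg _)
    _ = e * ∑ j, |v j| := (Finset.mul_sum _ _ _).symm

theorem Amat_add_mulVec_apply (a22 a33 : ℝ) (M : Matrix (Fin 3) (Fin 3) ℝ) (v : Fin 3 → ℝ)
    (i : Fin 3) : ((Amat a22 a33 + M) *ᵥ v) i = ![0, -a22, -a33] i * v i + (M *ᵥ v) i := by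
  simp [Amat, add_mulVec, mulVec_diagonal]

def transverseSq (v : Fin 3 → ℝ) : ℝ := v 1 ^ 2 + v 2 ^ 2

theorem transverseSq_nonneg (v : Fin 3 → ℝ) : 0 ≤ transverseSq v := by
  unfold transverseSq; positivity

def cylinder (xss ρ r : ℝ) : Set (Fin 3 → ℝ) := {v | |v 0 - xss| ≤ ρ ∧ transverseSq v ≤ r ^ 2}

theorem isClosed_cylinder (xss ρ r : ℝ) : IsClosed (cylinder xss ρ r) := by
  unfold cylinder transverseSq
  exact (isClosed_le (by fun_prop : Continuous fun v : Fin 3 → ℝ => |v 0 - xss|)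
    continuous_const).inter
    (isClosed_le (by fun_prop : Continuous fun v : Fin 3 → ℝ => v 1 ^ 2 + v 2 ^ 2)
    continuous_const)

section Cylinder

variable {a22 a33 xss ρ r e : ℝ} {M : Matrix (Fin 3) (Fin 3) ℝ} {v : Fin 3 → ℝ}

theorem abs_le_of_mem_cylinder (hxss : 0 ≤ xss) (hv : v ∈ cylinder xss ρ r) :
    |v 0| ≤ xss + ρ := by
  have := abs_sub_abs_le_abs_sub (v 0) xss
  rw [abs_of_nonneg hxss] at this
  linarith [hv.1]

theorem abs_add_abs_le_of_mem_cylinder (hr : 0 ≤ r) (hv : v ∈ cylinder xss ρ r) :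
    |v 1| + |v 2| ≤ 2 * r := by
  have hv := hv.2
  unfold transverseSq at hv
  linarith [abs_le_of_sq_le_sq (by nlinarith [sq_nonneg (v 2)] : v 1 ^ 2 ≤ r ^ 2) hr,
    abs_le_of_sq_le_sq (by nlinarith [sq_nonneg (v 1)] : v 2 ^ 2 ≤ r ^ 2) hr]

theorem abs_Amat_add_mulVec_zero_le (hxss : 0 ≤ xss) (hr : 0 ≤ r)
    (hM : ∀ i j, |M i j| ≤ e) (hv : v ∈ cylinder xss ρ r) :
    |((Amat a22 a33 + M) *ᵥ v) 0| ≤ e * (xss + 2 * ρ + 2 * r) := by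
  have he : 0 ≤ e := (abs_nonneg _).trans (hM 0 0)
  have hρ : 0 ≤ ρ := (abs_nonneg _).trans hv.1
  rw [Amat_add_mulVec_apply]
  simp only [Fin.isValue, Matrix.cons_val_zero, zero_mul, zero_add]
  refine (abs_mulVec_apply_le hM v 0).trans (mul_le_mul_of_nonneg_left ?_ he)
  rw [Fin.sum_univ_three]
  linarith [abs_le_of_mem_cylinder hxss hv, abs_add_abs_le_of_mem_cylinder hr hv]

theorem transverseSq_rate_le_of_mem_cylinder (hxss : 0 ≤ xss) (hr : 0 ≤ r)
    (hM : ∀ i j, |M i j| ≤ e) (hv : v ∈ cylinder xss ρ r) :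
    2 * v 1 * ((Amat a22 a33 + M) *ᵥ v) 1 + 2 * v 2 * ((Amat a22 a33 + M) *ᵥ v) 2 ≤
      -2 * (min a22 a33 - 2 * e) * transverseSq v + 4 * r * (xss + ρ) * e := by
  have he : 0 ≤ e := (abs_nonneg _).trans (hM 0 0)
  have hρ : 0 ≤ ρ := (abs_nonneg _).trans hv.1
  have hvq : ∀ i, v i * (M *ᵥ v) i ≤ |v i| * (e * (xss + ρ + (|v 1| + |v 2|))) := fun i => by
    refine (le_abs_self _).trans ?_
    rw [abs_mul]
    refine mul_le_mul_of_nonneg_left ((abs_mulVec_apply_le hM v i).trans ?_) (abs_nonneg _)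
    rw [Fin.sum_univ_three]
    exact mul_le_mul_of_nonneg_left (by linarith [abs_le_of_mem_cylinder hxss hv]) he
  have hs : |v 1| + |v 2| ≤ 2 * r := abs_add_abs_le_of_mem_cylinder hr hv
  have hs2 : (|v 1| + |v 2|) ^ 2 ≤ 2 * transverseSq v := by
    unfold transverseSq
    nlinarith [sq_abs (v 1), sq_abs (v 2), sq_nonneg (|v 1| - |v 2|)]
  simp only [Amat_add_mulVec_apply, Fin.isValue, Matrix.cons_val_one, Matrix.cons_val_two,
    Matrix.cons_val_zero, Matrix.head_cons, Matrix.tail_cons]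
  unfold transverseSq at hs2 ⊢
  linarith [hvq 1, hvq 2, mul_le_mul_of_nonneg_right (min_le_left a22 a33) (sq_nonneg (v 1)),
    mul_le_mul_of_nonneg_right (min_le_right a22 a33) (sq_nonneg (v 2)),
    mul_le_mul_of_nonneg_left hs2 he,
    mul_le_mul_of_nonneg_left hs (by positivity : 0 ≤ e * (xss + ρ))]

theorem transverseSq_rate_neg_of_mem_cylinder (hxss : 0 ≤ xss) (hr : 0 < r)
    (hM : ∀ i j, |M i j| ≤ e) (he : 2 * e * (1 + (xss + 2 * ρ) / r) < min a22 a33)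
    (hv : v ∈ cylinder xss ρ r) (hbdry : transverseSq v = r ^ 2) :
    2 * v 1 * ((Amat a22 a33 + M) *ᵥ v) 1 + 2 * v 2 * ((Amat a22 a33 + M) *ᵥ v) 2 < 0 := by
  have he0 : 0 ≤ e := (abs_nonneg _).trans (hM 0 0)
  have hρ : 0 ≤ ρ := (abs_nonneg _).trans hv.1
  have he' : 2 * e * r + 2 * e * (xss + 2 * ρ) < min a22 a33 * r := by
    have := mul_lt_mul_of_pos_right he hr
    rwa [mul_add, add_mul, mul_one, mul_assoc _ (_ / r), div_mul_cancel₀ _ hr.ne'] at this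
  refine (transverseSq_rate_le_of_mem_cylinder hxss hr.le hM hv).trans_lt ?_
  rw [hbdry]
  nlinarith [mul_nonneg he0 hρ]

end Cylinder

section Solution

variable {a22 a33 cb lam xss ρ r tss : ℝ} {B : ℝ → Matrix (Fin 3) (Fin 3) ℝ}
  {γ : ℝ → Fin 3 → ℝ}

theorem hasDerivAt_transverseSq (hγ : IsLinSolution a22 a33 B γ) (t : ℝ) :
    HasDerivAt (fun t => transverseSq (γ t))
      (2 * γ t 1 * ((Amat a22 a33 + B t) *ᵥ γ t) 1 +
        2 * γ t 2 * ((Amat a22 a33 + B t) *ᵥ γ t) 2) t := by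
  refine (((hasDerivAt_pi.1 (hγ t) 1).pow 2).add
    ((hasDerivAt_pi.1 (hγ t) 2).pow 2)).congr_deriv ?_
  ring

theorem mul_exp_neg_mul_le_of_le (hcb : 0 ≤ cb) (hlam : 0 ≤ lam) {t : ℝ} (ht : tss ≤ t) :
    cb * exp (-lam * t) ≤ cb * exp (-lam * tss) :=
  mul_le_mul_of_nonneg_left (exp_le_exp.2 (by nlinarith)) hcb

theorem abs_sub_lt_of_Icc_subset_cylinder (hxss : 0 ≤ xss) (hr : 0 ≤ r) (hlam : 0 < lam)
    (hcond3 : (1 / lam) * cb * exp (-lam * tss) * (xss + 2 * ρ + 2 * r) < ρ)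
    (hγ : IsLinSolution a22 a33 B γ) (hB : ∀ t ∈ Ici tss, ∀ i j, |B t i j| ≤ cb * exp (-lam * t))
    (hx0 : γ tss 0 = xss) {T : ℝ} (hT : tss ≤ T) (hsub : Icc tss T ⊆ γ ⁻¹' cylinder xss ρ r) :
    |γ T 0 - xss| < ρ := by
  calc |γ T 0 - xss| = |γ T 0 - γ tss 0| := by rw [hx0]
    _ ≤ cb * (xss + 2 * ρ + 2 * r) * exp (-lam * tss) / lam :=
      abs_sub_le_of_abs_deriv_le_exp hlam hT (fun t _ => hasDerivAt_pi.1 (hγ t) 0) fun t ht =>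
        (abs_Amat_add_mulVec_zero_le hxss hr (hB t ht.1) (hsub ht)).trans_eq (by ring)
    _ = (1 / lam) * cb * exp (-lam * tss) * (xss + 2 * ρ + 2 * r) := by ring
    _ < ρ := hcond3

theorem mapsTo_Ici_cylinder (hxss : 0 ≤ xss) (hρ : 0 ≤ ρ) (hr : 0 < r) (hcb : 0 ≤ cb)
    (hlam : 0 < lam)
    (hcond2 : 2 * cb * exp (-lam * tss) * (1 + (xss + 2 * ρ) / r) < min a22 a33)
    (hcond3 : (1 / lam) * cb * exp (-lam * tss) * (xss + 2 * ρ + 2 * r) < ρ)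
    (hγ : IsLinSolution a22 a33 B γ) (hB : ∀ t ∈ Ici tss, ∀ i j, |B t i j| ≤ cb * exp (-lam * t))
    (hx0 : γ tss 0 = xss) (hy0 : transverseSq (γ tss) ≤ r ^ 2) :
    MapsTo γ (Ici tss) (cylinder xss ρ r) := by
  have hγc : Continuous γ := continuous_iff_continuousAt.2 fun t => (hγ t).continuousAt
  intro b hb
  refine (((isClosed_cylinder xss ρ r).preimage hγc).inter isClosed_Icc
    ).Icc_subset_of_forall_mem_nhdsGT_of_Icc_subset (s := γ ⁻¹' cylinder xss ρ r)
    ⟨by simp [hx0, hρ], hy0⟩ (fun T hT hsub => ?_) ⟨hb, le_rfl⟩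
  have hx : ∀ᶠ t in 𝓝[>] T, |γ t 0 - xss| ≤ ρ := by
    have : ContinuousAt (fun t => |γ t 0 - xss|) T := by fun_prop
    exact ((this.eventually_lt continuousAt_const (abs_sub_lt_of_Icc_subset_cylinder hxss hr.le
      hlam hcond3 hγ hB hx0 hT.1 hsub)).filter_mono nhdsWithin_le_nhds).mono fun _ h => h.le
  have hy : ∀ᶠ t in 𝓝[>] T, transverseSq (γ t) ≤ r ^ 2 := by
    rcases (hsub ⟨hT.1, le_rfl⟩).2.lt_or_eq with hlt | hbdry
    · exact (((hasDerivAt_transverseSq hγ T).continuousAt.eventually_lt continuousAt_const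
        hlt).filter_mono nhdsWithin_le_nhds).mono fun _ h => h.le
    · -- on the boundary sphere the transverse part points strictly inwards
      have he : 2 * (cb * exp (-lam * T)) * (1 + (xss + 2 * ρ) / r) < min a22 a33 :=
        lt_of_le_of_lt (by gcongr ?_ * _; linarith [mul_exp_neg_mul_le_of_le hcb hlam.le hT.1])
          hcond2
      exact (HasDerivAt.eventually_nhdsGT_lt (hasDerivAt_transverseSq hγ T)
        (transverseSq_rate_neg_of_mem_cylinder hxss hr (hB T hT.1) he (hsub ⟨hT.1, le_rfl⟩)
          hbdry)).mono fun _ h => hbdry ▸ h.le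
  filter_upwards [hx, hy] with t hxt hyt using ⟨hxt, hyt⟩

theorem tendsto_transverseSq_zero (hxss : 0 ≤ xss) (hρ : 0 ≤ ρ) (hr : 0 < r) (hcb : 0 ≤ cb)
    (hlam : 0 < lam)
    (hcond2 : 2 * cb * exp (-lam * tss) * (1 + (xss + 2 * ρ) / r) < min a22 a33)
    (hγ : IsLinSolution a22 a33 B γ) (hB : ∀ t ∈ Ici tss, ∀ i j, |B t i j| ≤ cb * exp (-lam * t))
    (hinv : MapsTo γ (Ici tss) (cylinder xss ρ r)) :
    Tendsto (fun t => transverseSq (γ t)) atTop (𝓝 0) := by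
  have hε₀ : 2 * (cb * exp (-lam * tss)) < min a22 a33 := calc
    2 * (cb * exp (-lam * tss)) ≤ 2 * cb * exp (-lam * tss) * (1 + (xss + 2 * ρ) / r) := by
      rw [← mul_assoc]
      exact le_mul_of_one_le_right (by positivity) (le_add_of_nonneg_right (by positivity))
    _ < min a22 a33 := hcond2
  refine tendsto_zero_of_deriv_le_neg_mul_add_exp (a := tss)
    (κ := 2 * (min a22 a33 - 2 * (cb * exp (-lam * tss))))
    (K := 4 * r * (xss + ρ) * cb) (by linarith) hlam (by positivity)
    (fun t _ => transverseSq_nonneg _) (fun t _ => hasDerivAt_transverseSq hγ t) fun t ht => ?_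
  have he := mul_exp_neg_mul_le_of_le hcb hlam.le ht
  calc _ ≤ -2 * (min a22 a33 - 2 * (cb * exp (-lam * t))) * transverseSq (γ t) +
        4 * r * (xss + ρ) * (cb * exp (-lam * t)) :=
        transverseSq_rate_le_of_mem_cylinder hxss hr.le (hB t ht) (hinv ht)
    _ ≤ _ := by nlinarith [transverseSq_nonneg (γ t)]

end Solution

theorem forward_convergence_general (a22 a33 cb lam xss ρ r tss : ℝ)
    (hcb : 0 < cb) (hlam : 0 < lam)
    (hxss : 0 < xss) (hρ : 0 < ρ) (hr : 0 < r) (htss : 0 < tss)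
    (B : ℝ → Matrix (Fin 3) (Fin 3) ℝ)
    (hBbound : ∀ t : ℝ, ∀ i j : Fin 3, |B t i j| ≤ cb * Real.exp (-lam * |t|))
    (hcond2 : 2 * cb * Real.exp (-lam * tss) * (1 + (xss + 2 * ρ) / r) < min a22 a33)
    (hcond3 : (1 / lam) * cb * Real.exp (-lam * tss) * (xss + 2 * ρ + 2 * r) < ρ) :
    ∀ p : Fin 3 → ℝ, p 0 = xss → (p 1) ^ 2 + (p 2) ^ 2 ≤ r ^ 2 →
      ∀ γ : ℝ → Fin 3 → ℝ, IsLinSolution a22 a33 B γ → γ tss = p →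
        ∃ xp ∈ Set.Icc (xss - ρ) (xss + ρ),
          Tendsto γ atTop (nhds ![xp, 0, 0]) := by
  intro p hp0 hpr γ hγ rfl
  have hB : ∀ t ∈ Ici tss, ∀ i j, |B t i j| ≤ cb * exp (-lam * t) := fun t ht i j => by
    simpa [abs_of_pos (htss.trans_le ht)] using hBbound t i j
  have hinv := mapsTo_Ici_cylinder hxss.le hρ.le hr hcb.le hlam hcond2 hcond3 hγ hB hp0 hpr
  obtain ⟨xp, hxp⟩ := exists_tendsto_of_abs_deriv_le_exp hlam
    (fun t _ => hasDerivAt_pi.1 (hγ t) 0) fun t ht =>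
      (abs_Amat_add_mulVec_zero_le hxss.le hr.le (hB t ht) (hinv ht)).trans_eq
        (mul_right_comm _ _ _)
  have hxp_mem : xp ∈ Icc (xss - ρ) (xss + ρ) :=
    isClosed_Icc.mem_of_tendsto hxp <| eventually_atTop.2 ⟨tss, fun t ht =>
      have h := abs_sub_le_iff.1 (hinv ht).1; ⟨by linarith, by linarith⟩⟩
  have hy := tendsto_transverseSq_zero hxss.le hρ.le hr hcb.le hlam hcond2 hγ hB hinv
  refine ⟨xp, hxp_mem, tendsto_pi_nhds.2 fun i => ?_⟩
  fin_cases i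
  · exact hxp
  · exact tendsto_zero_of_tendsto_sq_add_sq hy
  · simpa using tendsto_zero_of_tendsto_sq_add_sq (f := fun t => γ t 2)
      (by simpa only [transverseSq, add_comm] using hy)

/-- **Lemma (forward convergence).**
Consider `γ' = (A + B(t))γ` on `ℝ × ℝ²`, `A = diag(0, -a₂₂, -a₃₃)` with `a₂₂, a₃₃ > 0`,
`B` continuous with `|b_ij(t)| ≤ c_b e^{-λ|t|}`.  Fix `x** > 0`, `ρ > 0`, `r > 0`,
`t** > 0` satisfying `6 c_b e^{-λt**} < min(a₂₂,a₃₃)`,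
`2 c_b e^{-λt**}(1 + (x**+2ρ)/r) < min(a₂₂,a₃₃)` and
`(1/λ) c_b e^{-λt**}(x** + 2ρ + 2r) < ρ`.  Then for every `p** ∈ {x**} × B̄(0,r)`, the
solution through `(t**, p**)` converges as `t → +∞`, with limit `(x₊**, 0, 0)`,
`x₊** ∈ [x** - ρ, x** + ρ]`. -/
theorem forward_convergence (a22 a33 cb lam xss ρ r tss : ℝ)
    (ha22 : 0 < a22) (ha33 : 0 < a33) (hcb : 0 < cb) (hlam : 0 < lam)
    (hxss : 0 < xss) (hρ : 0 < ρ) (hr : 0 < r) (htss : 0 < tss)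
    (B : ℝ → Matrix (Fin 3) (Fin 3) ℝ) (hBcont : Continuous B)
    (hBbound : ∀ t : ℝ, ∀ i j : Fin 3, |B t i j| ≤ cb * Real.exp (-lam * |t|))
    (hcond1 : 6 * cb * Real.exp (-lam * tss) < min a22 a33)
    (hcond2 : 2 * cb * Real.exp (-lam * tss) * (1 + (xss + 2 * ρ) / r) < min a22 a33)
    (hcond3 : (1 / lam) * cb * Real.exp (-lam * tss) * (xss + 2 * ρ + 2 * r) < ρ) :
    ∀ p : Fin 3 → ℝ, p 0 = xss → (p 1) ^ 2 + (p 2) ^ 2 ≤ r ^ 2 →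
      ∀ γ : ℝ → Fin 3 → ℝ, IsLinSolution a22 a33 B γ → γ tss = p →
        ∃ xp ∈ Set.Icc (xss - ρ) (xss + ρ),
          Tendsto γ atTop (nhds ![xp, 0, 0]) :=
  forward_convergence_general a22 a33 cb lam xss ρ r tss hcb hlam hxss hρ hr htss B hBbound hcond2
    hcond3
end

section
/- Under the hypotheses of the unstable-manifold theorem (f C¹ on D = B̄_u(R) × B̄_s(R), rate conditions μ⃗ < 0 < ξ⃗, D an isolating block), let W^u = { z ∈ D : there exists a solution γ : (−∞, 0] → D of γ' = f(γ) with γ(0) = z }, which is the graph of an L-Lipschitz function. Then for any p₁, p₂ ∈ W^u, with γ₁, γ₂ : (−∞,0] → D the corresponding backward solutions with γᵢ(0) = pᵢ, one has for all t ≥ 0: ‖γ₁(−t) − γ₂(−t)‖ ≤ c·e^{−ξ⃗·t}·‖π_x(p₁ − p₂)‖, where c = 2·√(1 + L²). -/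
/-!
Write `γ₁ - γ₂ = (ζ, η)`. The point is that this difference never leaves the cone
`‖η‖ ≤ L‖ζ‖`. On the boundary of the cone the rate conditions give
`d/dt (‖η‖² - L²‖ζ‖²) ≤ 2L²‖ζ‖²(μ⃗ - ξ⃗) < 0`, strictly because by uniqueness the two orbits
never meet, so `ζ ≠ 0` there. Hence a difference outside the cone was outside it at all earlier
times. There `‖η‖²` decays at
rate `2μ⃗ < 0`, i.e. it grows exponentially backwards in time, which is impossible in the bounded
set `D`. Inside the cone `⟪ζ, ζ'⟫ ≥ ξ⃗‖ζ‖²`, so `‖ζ(-t)‖ ≤ e^{-ξ⃗t}‖ζ(0)‖`, and the cone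
bounds `‖γ₁ - γ₂‖` by `√(1 + L²)‖ζ‖`.
-/

open Filter Set Metric

noncomputable section

abbrev Esp (n : ℕ) : Type := EuclideanSpace ℝ (Fin n)

/-- Logarithmic norm `l(A) = lim_{h→0⁺} (‖I + hA‖ - 1)/h` (operator norm). -/
def logNorm {n : ℕ} (T : Esp n →L[ℝ] Esp n) : ℝ :=
  limUnder (nhdsWithin (0:ℝ) (Set.Ioi 0))
    (fun h : ℝ => (‖ContinuousLinearMap.id ℝ (Esp n) + h • T‖ - 1) / h)

-- `m(A) = 1/‖A⁻¹‖` if `A` is invertible, `0` otherwise.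
open scoped Classical in
def mVal {n : ℕ} (T : Esp n →L[ℝ] Esp n) : ℝ :=
  if IsUnit T then ‖Ring.inverse T‖⁻¹ else 0

/-- `m_l(A) = -l(-A)`. -/
def mlVal {n : ℕ} (T : Esp n →L[ℝ] Esp n) : ℝ := - logNorm (-T)

/-- The continuous linear map on Euclidean spaces associated with a matrix. -/
def opOf {m n : ℕ} (M : Matrix (Fin m) (Fin n) ℝ) : Esp n →L[ℝ] Esp m :=
  LinearMap.toContinuousLinearMap (Matrix.toEuclideanLin M)

/-- Interval hull of a family of matrices over a set `D`. -/
def intervalHull {α : Type*} {m n : ℕ} (g : α → Matrix (Fin m) (Fin n) ℝ) (D : Set α) :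
    Set (Matrix (Fin m) (Fin n) ℝ) :=
  {M | ∀ i j, M i j ∈
    Set.Icc (sInf ((fun p => g p i j) '' D)) (sSup ((fun p => g p i j) '' D))}

variable {u s : ℕ}

/-- The `yy`-block of a linear map on `ℝᵘ × ℝˢ`. -/
def blockYY (T : (Esp u × Esp s) →L[ℝ] (Esp u × Esp s)) : Esp s →L[ℝ] Esp s :=
  (ContinuousLinearMap.snd ℝ (Esp u) (Esp s)).comp
    (T.comp (ContinuousLinearMap.inr ℝ (Esp u) (Esp s)))

/-- The `yx`-block. -/
def blockYX (T : (Esp u × Esp s) →L[ℝ] (Esp u × Esp s)) : Esp u →L[ℝ] Esp s :=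
  (ContinuousLinearMap.snd ℝ (Esp u) (Esp s)).comp
    (T.comp (ContinuousLinearMap.inl ℝ (Esp u) (Esp s)))

/-- The `xx`-block. -/
def blockXX (T : (Esp u × Esp s) →L[ℝ] (Esp u × Esp s)) : Esp u →L[ℝ] Esp u :=
  (ContinuousLinearMap.fst ℝ (Esp u) (Esp s)).comp
    (T.comp (ContinuousLinearMap.inl ℝ (Esp u) (Esp s)))

/-- The `xy`-block. -/
def blockXY (T : (Esp u × Esp s) →L[ℝ] (Esp u × Esp s)) : Esp s →L[ℝ] Esp u :=
  (ContinuousLinearMap.fst ℝ (Esp u) (Esp s)).comp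
    (T.comp (ContinuousLinearMap.inr ℝ (Esp u) (Esp s)))

/-- Matrix of partial derivatives `∂(f_x)_i/∂x_j` at `z`. -/
def DxxMat (f : Esp u × Esp s → Esp u × Esp s) (z : Esp u × Esp s) :
    Matrix (Fin u) (Fin u) ℝ :=
  Matrix.of fun i j => blockXX (fderiv ℝ f z) (EuclideanSpace.single j 1) i

/-- Matrix of partial derivatives `∂(f_x)_i/∂y_j` at `z`. -/
def DxyMat (f : Esp u × Esp s → Esp u × Esp s) (z : Esp u × Esp s) :
    Matrix (Fin u) (Fin s) ℝ :=
  Matrix.of fun i j => blockXY (fderiv ℝ f z) (EuclideanSpace.single j 1) i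

/-- `μ⃗ = sup_{z∈D} { l(∂f_y/∂y(z)) + (1/L)‖∂f_y/∂x(z)‖ }`. -/
def muArrow (L : ℝ) (f : Esp u × Esp s → Esp u × Esp s) (D : Set (Esp u × Esp s)) : ℝ :=
  sSup ((fun z => logNorm (blockYY (fderiv ℝ f z)) + (1 / L) * ‖blockYX (fderiv ℝ f z)‖) '' D)

/-- `ξ⃗ = m_l(∂f_x/∂x(D)) - L‖∂f_x/∂y(D)‖` (interval-hull versions). -/
def xiArrow (L : ℝ) (f : Esp u × Esp s → Esp u × Esp s) (D : Set (Esp u × Esp s)) : ℝ :=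
  sInf ((fun M => mlVal (opOf M)) '' intervalHull (DxxMat f) D)
    - L * sSup ((fun M => ‖opOf M‖) '' intervalHull (DxyMat f) D)

end

open scoped RealInnerProductSpace Topology

section LogNorm

-- On `Esp 0` we have `‖id‖ = 0`, the quotient below tends to `-∞` and `logNorm` is a junk value:
-- hence the `Nontrivial` assumptions.
variable {n : ℕ} (T : Esp n →L[ℝ] Esp n)

noncomputable def logNormQuotient (h : ℝ) : ℝ :=
  (‖ContinuousLinearMap.id ℝ (Esp n) + h • T‖ - 1) / h

theorem monotoneOn_logNormQuotient [Nontrivial (Esp n)] :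
    MonotoneOn (logNormQuotient T) (Ioi 0) := by
  have hconv : ConvexOn ℝ univ fun h : ℝ => ‖ContinuousLinearMap.id ℝ (Esp n) + h • T‖ :=
    (convexOn_univ_norm.comp_affineMap (AffineMap.lineMap (ContinuousLinearMap.id ℝ (Esp n))
      (ContinuousLinearMap.id ℝ (Esp n) + T))).congr fun h _ => by
        simp [AffineMap.lineMap_apply, add_comm]
  intro a ha b hb hab
  have h := hconv.secant_mono (a := 0) (mem_univ _) (mem_univ a) (mem_univ b) ha.ne' hb.ne' hab
  rw [show (0 : ℝ) • T = 0 from zero_smul ℝ T, add_zero, ContinuousLinearMap.norm_id] at h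
  simpa [logNormQuotient] using h

theorem neg_norm_le_logNormQuotient [Nontrivial (Esp n)] {h : ℝ} (hh : 0 < h) :
    -‖T‖ ≤ logNormQuotient T h := by
  have h1 := norm_sub_norm_le (ContinuousLinearMap.id ℝ (Esp n)) (-(h • T))
  rw [sub_neg_eq_add, ContinuousLinearMap.norm_id, norm_neg, norm_smul, Real.norm_of_nonneg hh.le]
    at h1
  rw [logNormQuotient, le_div_iff₀ hh]
  linarith

theorem logNormQuotient_le_norm [Nontrivial (Esp n)] {h : ℝ} (hh : 0 < h) :
    logNormQuotient T h ≤ ‖T‖ := by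
  have h1 := norm_add_le (ContinuousLinearMap.id ℝ (Esp n)) (h • T)
  rw [ContinuousLinearMap.norm_id, norm_smul, Real.norm_of_nonneg hh.le] at h1
  rw [logNormQuotient, div_le_iff₀ hh]
  linarith

theorem tendsto_logNormQuotient_logNorm [Nontrivial (Esp n)] :
    Tendsto (logNormQuotient T) (𝓝[>] 0) (𝓝 (logNorm T)) := by
  have h := (monotoneOn_logNormQuotient T).tendsto_nhdsGT
    ⟨-‖T‖, by rintro _ ⟨h, hh, rfl⟩; exact neg_norm_le_logNormQuotient T hh⟩
  have hdef : logNorm T = limUnder (𝓝[>] 0) (logNormQuotient T) := rfl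
  rwa [hdef, h.limUnder_eq]

theorem logNorm_le_norm [Nontrivial (Esp n)] : logNorm T ≤ ‖T‖ :=
  le_of_tendsto (tendsto_logNormQuotient_logNorm T)
    (eventually_nhdsWithin_of_forall fun _ hh => logNormQuotient_le_norm T hh)

theorem neg_norm_le_mlVal [Nontrivial (Esp n)] : -‖T‖ ≤ mlVal T := by
  simpa [mlVal] using logNorm_le_norm (-T)

theorem inner_le_logNorm_mul_sq (x : Esp n) : ⟪x, T x⟫ ≤ logNorm T * ‖x‖ ^ 2 := by
  rcases eq_or_ne x 0 with rfl | hx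
  · simp
  have := nontrivial_of_ne x 0 hx
  refine ge_of_tendsto ((tendsto_logNormQuotient_logNorm T).mul_const _)
    (eventually_nhdsWithin_of_forall fun h (hh : 0 < h) => ?_)
  have hcs : ⟪x, x + h • T x⟫ ≤ ‖ContinuousLinearMap.id ℝ (Esp n) + h • T‖ * ‖x‖ ^ 2 := by
    calc ⟪x, x + h • T x⟫ ≤ ‖x‖ * ‖(ContinuousLinearMap.id ℝ (Esp n) + h • T) x‖ :=
          real_inner_le_norm _ _
      _ ≤ ‖x‖ * (‖ContinuousLinearMap.id ℝ (Esp n) + h • T‖ * ‖x‖) := by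
          gcongr; exact ContinuousLinearMap.le_opNorm _ _
      _ = _ := by ring
  rw [inner_add_right, real_inner_self_eq_norm_sq, real_inner_smul_right] at hcs
  rw [logNormQuotient, div_mul_eq_mul_div, le_div_iff₀ hh]
  linarith

theorem mlVal_mul_sq_le_inner (x : Esp n) : mlVal T * ‖x‖ ^ 2 ≤ ⟪x, T x⟫ := by
  have h := inner_le_logNorm_mul_sq (-T) x
  rw [neg_apply, inner_neg_right] at h
  rw [mlVal]
  linarith

end LogNorm

section IntervalHull

theorem isCompact_intervalHull {α : Type*} {m n : ℕ} (g : α → Matrix (Fin m) (Fin n) ℝ)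
    (D : Set α) : IsCompact (intervalHull g D) := by
  have h : intervalHull g D = univ.pi fun i => univ.pi fun j =>
      Icc (sInf ((fun p => g p i j) '' D)) (sSup ((fun p => g p i j) '' D)) := by
    ext M
    exact ⟨fun h i _ j _ => h i j, fun h i j => h i (mem_univ i) j (mem_univ j)⟩
  rw [h]
  exact isCompact_univ_pi fun i => isCompact_univ_pi fun j => isCompact_Icc

theorem apply_mem_intervalHull {α : Type*} [TopologicalSpace α] {m n : ℕ}
    {g : α → Matrix (Fin m) (Fin n) ℝ} {D : Set α} (hD : IsCompact D)
    (hg : ∀ i j, ContinuousOn (fun p => g p i j) D) {z : α} (hz : z ∈ D) :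
    g z ∈ intervalHull g D := fun i j =>
  ⟨csInf_le ((hD.bddBelow_image (hg i j))) (mem_image_of_mem _ hz),
    le_csSup ((hD.bddAbove_image (hg i j))) (mem_image_of_mem _ hz)⟩

theorem continuous_opOf {m n : ℕ} : Continuous (opOf : Matrix (Fin m) (Fin n) ℝ → _) :=
  (Matrix.toEuclideanLin.trans (LinearMap.toContinuousLinearMap (𝕜 := ℝ) (E := Esp n)
    (F' := Esp m))).toLinearMap.continuous_of_finiteDimensional

theorem bddAbove_norm_opOf_intervalHull {α : Type*} {m n : ℕ}
    (g : α → Matrix (Fin m) (Fin n) ℝ) (D : Set α) :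
    BddAbove ((fun M => ‖opOf M‖) '' intervalHull g D) :=
  (isCompact_intervalHull g D).bddAbove_image continuous_opOf.norm.continuousOn

theorem opOf_of_apply_single {m n : ℕ} (T : Esp n →L[ℝ] Esp m) :
    opOf (Matrix.of fun i j => T (EuclideanSpace.single j 1) i) = T := by
  apply ContinuousLinearMap.coe_injective
  refine (EuclideanSpace.basisFun (Fin n) ℝ).toBasis.ext fun j => ?_
  ext i
  simp [opOf, Matrix.toLpLin_apply]

end IntervalHull

section Blocks

variable {u s : ℕ}

theorem fst_apply_eq_blockXX_add_blockXY (T : (Esp u × Esp s) →L[ℝ] (Esp u × Esp s))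
    (v : Esp u × Esp s) : (T v).1 = blockXX T v.1 + blockXY T v.2 := by
  conv_lhs => rw [← Prod.fst_add_snd v, map_add]
  rfl

theorem snd_apply_eq_blockYX_add_blockYY (T : (Esp u × Esp s) →L[ℝ] (Esp u × Esp s))
    (v : Esp u × Esp s) : (T v).2 = blockYX T v.1 + blockYY T v.2 := by
  conv_lhs => rw [← Prod.fst_add_snd v, map_add]
  rfl

theorem norm_blockYY_le (T : (Esp u × Esp s) →L[ℝ] (Esp u × Esp s)) : ‖blockYY T‖ ≤ ‖T‖ :=
  ContinuousLinearMap.opNorm_le_bound _ (norm_nonneg T) fun y =>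
    calc ‖(T (0, y)).2‖ ≤ ‖T (0, y)‖ := norm_snd_le _
      _ ≤ ‖T‖ * ‖((0 : Esp u), y)‖ := T.le_opNorm _
      _ = ‖T‖ * ‖y‖ := by simp

theorem norm_blockYX_le (T : (Esp u × Esp s) →L[ℝ] (Esp u × Esp s)) : ‖blockYX T‖ ≤ ‖T‖ :=
  ContinuousLinearMap.opNorm_le_bound _ (norm_nonneg T) fun x =>
    calc ‖(T (x, 0)).2‖ ≤ ‖T (x, 0)‖ := norm_snd_le _
      _ ≤ ‖T‖ * ‖(x, (0 : Esp s))‖ := T.le_opNorm _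
      _ = ‖T‖ * ‖x‖ := by simp

variable {f : Esp u × Esp s → Esp u × Esp s} {D : Set (Esp u × Esp s)} {z : Esp u × Esp s}

theorem opOf_DxxMat : opOf (DxxMat f z) = blockXX (fderiv ℝ f z) :=
  opOf_of_apply_single _

theorem opOf_DxyMat : opOf (DxyMat f z) = blockXY (fderiv ℝ f z) :=
  opOf_of_apply_single _

theorem continuous_DxxMat_apply (hf : ContDiff ℝ 1 f) (i j : Fin u) :
    Continuous fun z => DxxMat f z i j := by
  have := hf.continuous_fderiv one_ne_zero
  unfold DxxMat blockXX
  fun_prop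

theorem continuous_DxyMat_apply (hf : ContDiff ℝ 1 f) (i : Fin u) (j : Fin s) :
    Continuous fun z => DxyMat f z i j := by
  have := hf.continuous_fderiv one_ne_zero
  unfold DxyMat blockXY
  fun_prop

theorem sInf_mlVal_le_mlVal_blockXX [Nontrivial (Esp u)] (hf : ContDiff ℝ 1 f)
    (hD : IsCompact D) (hz : z ∈ D) :
    sInf ((fun M => mlVal (opOf M)) '' intervalHull (DxxMat f) D) ≤
      mlVal (blockXX (fderiv ℝ f z)) := by
  obtain ⟨C, hC⟩ := bddAbove_norm_opOf_intervalHull (DxxMat f) D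
  rw [← opOf_DxxMat]
  refine csInf_le ⟨-C, ?_⟩ (mem_image_of_mem _ (apply_mem_intervalHull hD
    (fun i j => (continuous_DxxMat_apply hf i j).continuousOn) hz))
  rintro _ ⟨M, hM, rfl⟩
  exact (neg_le_neg (hC (mem_image_of_mem _ hM))).trans (neg_norm_le_mlVal _)

theorem norm_blockXY_le_sSup (hf : ContDiff ℝ 1 f) (hD : IsCompact D) (hz : z ∈ D) :
    ‖blockXY (fderiv ℝ f z)‖ ≤ sSup ((fun M => ‖opOf M‖) '' intervalHull (DxyMat f) D) := by
  rw [← opOf_DxyMat]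
  exact le_csSup (bddAbove_norm_opOf_intervalHull _ _) (mem_image_of_mem _ (apply_mem_intervalHull
    hD (fun i j => (continuous_DxyMat_apply hf i j).continuousOn) hz))

theorem logNorm_add_le_muArrow [Nontrivial (Esp s)] (L : ℝ) (hf : ContDiff ℝ 1 f)
    (hD : IsCompact D) (hz : z ∈ D) :
    logNorm (blockYY (fderiv ℝ f z)) + (1 / L) * ‖blockYX (fderiv ℝ f z)‖ ≤ muArrow L f D := by
  obtain ⟨C, hC⟩ := hD.bddAbove_image (hf.continuous_fderiv one_ne_zero).norm.continuousOn
  refine le_csSup ⟨C + |1 / L| * C, ?_⟩ (mem_image_of_mem _ hz)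
  rintro _ ⟨w, hw, rfl⟩
  have hT : ‖fderiv ℝ f w‖ ≤ C := hC (mem_image_of_mem _ hw)
  have hYY := (logNorm_le_norm _).trans (norm_blockYY_le (fderiv ℝ f w))
  have hYX : (1 / L) * ‖blockYX (fderiv ℝ f w)‖ ≤ |1 / L| * C :=
    (mul_le_mul_of_nonneg_right (le_abs_self _) (norm_nonneg _)).trans
      (mul_le_mul_of_nonneg_left ((norm_blockYX_le _).trans hT) (abs_nonneg _))
  linarith

end Blocks

theorem Convex.exists_inner_sub_eq_inner_fderiv {E G : Type*} [NormedAddCommGroup E]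
    [NormedSpace ℝ E] [NormedAddCommGroup G] [InnerProductSpace ℝ G] {g : E → G}
    {g' : E → E →L[ℝ] G} {S : Set E} (hS : Convex ℝ S) (hg : ∀ x ∈ S, HasFDerivAt g (g' x) x)
    {p q : E} (hp : p ∈ S) (hq : q ∈ S) (w : G) :
    ∃ z ∈ S, ⟪w, g p - g q⟫ = ⟪w, g' z (p - q)⟫ := by
  obtain ⟨z, hz, h⟩ := domain_mvt (f := fun x => ⟪w, g x⟫)
    (fun x hx => ((innerSL ℝ w).hasFDerivAt.comp x (hg x hx)).hasFDerivWithinAt) hS hq hp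
  exact ⟨z, hS.segment_subset hq hp hz, by simpa [inner_sub_right] using h⟩

section PointwiseEstimates

variable {u s : ℕ} {f : Esp u × Esp s → Esp u × Esp s} {D : Set (Esp u × Esp s)} {L : ℝ}
  {p q : Esp u × Esp s}

theorem exists_inner_fst_sub_eq (hf : ContDiff ℝ 1 f) (hD : Convex ℝ D) (hp : p ∈ D)
    (hq : q ∈ D) (w : Esp u) : ∃ z ∈ D, ⟪w, (f p - f q).1⟫ =
      ⟪w, blockXX (fderiv ℝ f z) (p - q).1 + blockXY (fderiv ℝ f z) (p - q).2⟫ := by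
  obtain ⟨z, hz, h⟩ := hD.exists_inner_sub_eq_inner_fderiv
    (fun x _ => (hf.differentiable one_ne_zero x).hasFDerivAt.fst) hp hq w
  exact ⟨z, hz, by rw [Prod.fst_sub, h, ← fst_apply_eq_blockXX_add_blockXY]; rfl⟩

theorem exists_inner_snd_sub_eq (hf : ContDiff ℝ 1 f) (hD : Convex ℝ D) (hp : p ∈ D)
    (hq : q ∈ D) (w : Esp s) : ∃ z ∈ D, ⟪w, (f p - f q).2⟫ =
      ⟪w, blockYX (fderiv ℝ f z) (p - q).1 + blockYY (fderiv ℝ f z) (p - q).2⟫ := by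
  obtain ⟨z, hz, h⟩ := hD.exists_inner_sub_eq_inner_fderiv
    (fun x _ => (hf.differentiable one_ne_zero x).hasFDerivAt.snd) hp hq w
  exact ⟨z, hz, by rw [Prod.snd_sub, h, ← snd_apply_eq_blockYX_add_blockYY]; rfl⟩

theorem xiArrow_mul_sq_le_inner_fst (hf : ContDiff ℝ 1 f) (hDc : IsCompact D)
    (hDv : Convex ℝ D) (hp : p ∈ D) (hq : q ∈ D)
    (hcone : ‖(p - q).2‖ ≤ L * ‖(p - q).1‖) :
    xiArrow L f D * ‖(p - q).1‖ ^ 2 ≤ ⟪(p - q).1, (f p - f q).1⟫ := by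
  set ζ := (p - q).1
  set η := (p - q).2
  rcases eq_or_ne ζ 0 with hζ | hζ
  · simp [hζ]
  have := nontrivial_of_ne ζ 0 hζ
  obtain ⟨z, hz, he⟩ := exists_inner_fst_sub_eq hf hDv hp hq ζ
  set A := blockXX (fderiv ℝ f z)
  set B := blockXY (fderiv ℝ f z)
  set β := sSup ((fun M => ‖opOf M‖) '' intervalHull (DxyMat f) D)
  have hA := mul_le_mul_of_nonneg_right (sInf_mlVal_le_mlVal_blockXX hf hDc hz) (sq_nonneg ‖ζ‖)
  have hB : ‖B‖ ≤ β := norm_blockXY_le_sSup hf hDc hz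
  have hBη : -(β * L * ‖ζ‖ ^ 2) ≤ ⟪ζ, B η⟫ :=
    calc -(β * L * ‖ζ‖ ^ 2) = -(‖ζ‖ * (β * (L * ‖ζ‖))) := by ring
      _ ≤ -(‖ζ‖ * (‖B‖ * ‖η‖)) := neg_le_neg (mul_le_mul_of_nonneg_left
          (mul_le_mul hB hcone (norm_nonneg _) ((norm_nonneg _).trans hB)) (norm_nonneg _))
      _ ≤ -(‖ζ‖ * ‖B η‖) := neg_le_neg (mul_le_mul_of_nonneg_left (B.le_opNorm η) (norm_nonneg _))
      _ ≤ ⟪ζ, B η⟫ := neg_le_of_abs_le (abs_real_inner_le_norm _ _)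
  rw [he, inner_add_right, xiArrow]
  linarith [mlVal_mul_sq_le_inner A ζ]

theorem inner_snd_le_muArrow_mul_sq (hf : ContDiff ℝ 1 f) (hDc : IsCompact D)
    (hDv : Convex ℝ D) (hL : 0 < L) (hp : p ∈ D) (hq : q ∈ D)
    (hcone : L * ‖(p - q).1‖ ≤ ‖(p - q).2‖) :
    ⟪(p - q).2, (f p - f q).2⟫ ≤ muArrow L f D * ‖(p - q).2‖ ^ 2 := by
  set ζ := (p - q).1
  set η := (p - q).2
  rcases eq_or_ne η 0 with hη | hη
  · simp [hη]
  have := nontrivial_of_ne η 0 hη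
  obtain ⟨z, hz, he⟩ := exists_inner_snd_sub_eq hf hDv hp hq η
  set A := blockYY (fderiv ℝ f z)
  set C := blockYX (fderiv ℝ f z)
  have hζ : ‖ζ‖ ≤ ‖η‖ / L := (le_div_iff₀ hL).2 (by linarith)
  have hCζ : ⟪η, C ζ⟫ ≤ 1 / L * ‖C‖ * ‖η‖ ^ 2 :=
    calc ⟪η, C ζ⟫ ≤ ‖η‖ * ‖C ζ‖ := real_inner_le_norm _ _
      _ ≤ ‖η‖ * (‖C‖ * (‖η‖ / L)) := mul_le_mul_of_nonneg_left
          ((C.le_opNorm ζ).trans (mul_le_mul_of_nonneg_left hζ (norm_nonneg _))) (norm_nonneg _)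
      _ = 1 / L * ‖C‖ * ‖η‖ ^ 2 := by ring
  have hμ := mul_le_mul_of_nonneg_right (logNorm_add_le_muArrow L hf hDc hz) (sq_nonneg ‖η‖)
  rw [he, inner_add_right]
  linarith [inner_le_logNorm_mul_sq A η]

theorem inner_snd_sub_sq_mul_inner_fst_neg (hf : ContDiff ℝ 1 f) (hDc : IsCompact D)
    (hDv : Convex ℝ D) (hL : 0 < L)
    (hmuxi : muArrow L f D < xiArrow L f D) (hp : p ∈ D) (hq : q ∈ D) (hpq : p ≠ q)
    (hbd : ‖(p - q).2‖ = L * ‖(p - q).1‖) :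
    ⟪(p - q).2, (f p - f q).2⟫ - L ^ 2 * ⟪(p - q).1, (f p - f q).1⟫ < 0 := by
  have hζ : (p - q).1 ≠ 0 := by
    intro h0
    rw [h0, norm_zero, mul_zero, norm_eq_zero] at hbd
    exact hpq (sub_eq_zero.1 (Prod.ext h0 hbd))
  have hμ := inner_snd_le_muArrow_mul_sq hf hDc hDv hL hp hq hbd.ge
  have hξ := xiArrow_mul_sq_le_inner_fst hf hDc hDv hp hq hbd.le
  have hpos : 0 < L ^ 2 * ‖(p - q).1‖ ^ 2 := by positivity
  rw [hbd, mul_pow] at hμ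
  nlinarith [mul_le_mul_of_nonneg_left hξ (sq_nonneg L), mul_lt_mul_of_pos_left hmuxi hpos]

end PointwiseEstimates

theorem le_mul_exp_of_hasDerivAt_le_mul {g g' : ℝ → ℝ} {a b c : ℝ} (hab : a ≤ b)
    (hg : ∀ x ∈ Icc a b, HasDerivAt g (g' x) x) (hg' : ∀ x ∈ Icc a b, g' x ≤ c * g x) :
    g b ≤ g a * Real.exp (c * (b - a)) := by
  have h := le_gronwallBound_of_liminf_deriv_right_le (f' := g') (ε := 0)
    (HasDerivAt.continuousOn hg)
    (fun x hx _ hr => (hg x (Ico_subset_Icc_self hx)).hasDerivWithinAt.liminf_right_slope_le hr)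
    le_rfl (fun x hx => by simpa using hg' x (Ico_subset_Icc_self hx)) b ⟨hab, le_rfl⟩
  rwa [gronwallBound_ε0] at h

theorem nonpos_of_hasDerivAt_le_mul_of_bddAbove {g g' : ℝ → ℝ} {b c : ℝ} (hc : c < 0)
    (hg : ∀ x ≤ b, HasDerivAt g (g' x) x) (hg' : ∀ x ≤ b, g' x ≤ c * g x)
    (hbdd : BddAbove (g '' Iic b)) : g b ≤ 0 := by
  obtain ⟨C, hC⟩ := hbdd
  have hlim : Tendsto (fun a => C * Real.exp (c * (b - a))) atBot (𝓝 0) := by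
    have h := Real.tendsto_exp_atBot.comp
      ((tendsto_atTop_add_const_left atBot b tendsto_neg_atBot_atTop).const_mul_atTop_of_neg hc)
    simpa [sub_eq_add_neg] using h.const_mul C
  refine ge_of_tendsto hlim (eventually_atBot.2 ⟨b, fun a ha => ?_⟩)
  calc g b ≤ g a * Real.exp (c * (b - a)) :=
        le_mul_exp_of_hasDerivAt_le_mul ha (fun x hx => hg x hx.2) (fun x hx => hg' x hx.2)
    _ ≤ C * Real.exp (c * (b - a)) :=
        mul_le_mul_of_nonneg_right (hC (mem_image_of_mem g ha)) (Real.exp_pos _).le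

theorem norm_le_exp_mul_norm_of_mul_sq_le_inner {E : Type*} [NormedAddCommGroup E]
    [InnerProductSpace ℝ E] {ζ ζ' : ℝ → E} {a b ξ : ℝ} (hab : a ≤ b)
    (hζ : ∀ x ∈ Icc a b, HasDerivAt ζ (ζ' x) x)
    (hξ : ∀ x ∈ Icc a b, ξ * ‖ζ x‖ ^ 2 ≤ ⟪ζ x, ζ' x⟫) :
    ‖ζ a‖ ≤ Real.exp (-ξ * (b - a)) * ‖ζ b‖ := by
  have hg := le_mul_exp_of_hasDerivAt_le_mul (g := fun x => -‖ζ x‖ ^ 2) (c := 2 * ξ) hab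
    (fun x hx => (hζ x hx).norm_sq.neg) (fun x hx => by linarith [hξ x hx])
  have hexp : Real.exp (2 * ξ * (b - a)) * Real.exp (-ξ * (b - a)) ^ 2 = 1 := by
    rw [sq, ← Real.exp_add, ← Real.exp_add, ← Real.exp_zero]
    ring_nf
  rw [← pow_le_pow_iff_left₀ (norm_nonneg _) (by positivity) two_ne_zero]
  calc ‖ζ a‖ ^ 2 = ‖ζ a‖ ^ 2 * Real.exp (2 * ξ * (b - a)) * Real.exp (-ξ * (b - a)) ^ 2 := by
        rw [mul_assoc, hexp, mul_one]
    _ ≤ ‖ζ b‖ ^ 2 * Real.exp (-ξ * (b - a)) ^ 2 :=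
        mul_le_mul_of_nonneg_right (by linarith) (sq_nonneg _)
    _ = (Real.exp (-ξ * (b - a)) * ‖ζ b‖) ^ 2 := by ring

theorem Prod.norm_le_sqrt_one_add_sq_mul_norm_fst {E F : Type*} [SeminormedAddCommGroup E]
    [SeminormedAddCommGroup F] {L : ℝ} {v : E × F} (h : ‖v.2‖ ≤ L * ‖v.1‖) :
    ‖v‖ ≤ √(1 + L ^ 2) * ‖v.1‖ := by
  rw [Prod.norm_def]
  refine max_le (le_mul_of_one_le_left (norm_nonneg _) (Real.one_le_sqrt.2 (by nlinarith)))
    (h.trans (mul_le_mul_of_nonneg_right ?_ (norm_nonneg _)))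
  exact (le_abs_self L).trans (Real.abs_le_sqrt (by nlinarith))

theorem HasDerivAt.norm_sq_fst {E F : Type*} [NormedAddCommGroup E] [InnerProductSpace ℝ E]
    [NormedAddCommGroup F] [InnerProductSpace ℝ F] {c : ℝ → E × F} {c' : E × F} {t : ℝ}
    (h : HasDerivAt c c' t) : HasDerivAt (fun τ => ‖(c τ).1‖ ^ 2) (2 * ⟪(c t).1, c'.1⟫) t :=
  (hasFDerivAt_fst.comp_hasDerivAt t h).norm_sq

theorem HasDerivAt.norm_sq_snd {E F : Type*} [NormedAddCommGroup E] [InnerProductSpace ℝ E]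
    [NormedAddCommGroup F] [InnerProductSpace ℝ F] {c : ℝ → E × F} {c' : E × F} {t : ℝ}
    (h : HasDerivAt c c' t) : HasDerivAt (fun τ => ‖(c τ).2‖ ^ 2) (2 * ⟪(c t).2, c'.2⟫) t :=
  (hasFDerivAt_snd.comp_hasDerivAt t h).norm_sq

def IsBackwardOrbit {E : Type*} [NormedAddCommGroup E] [NormedSpace ℝ E] (f : E → E) (D : Set E)
    (γ : ℝ → E) : Prop :=
  ∀ t : ℝ, t ≤ 0 → γ t ∈ D ∧ HasDerivAt γ (f (γ t)) t

theorem IsBackwardOrbit.eq_of_eq {E : Type*} [NormedAddCommGroup E] [NormedSpace ℝ E]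
    {f : E → E} {D : Set E} {K : NNReal} {γ₁ γ₂ : ℝ → E} (h₁ : IsBackwardOrbit f D γ₁)
    (h₂ : IsBackwardOrbit f D γ₂) (hf : LipschitzOnWith K f D) {a b : ℝ} (hab : a ≤ b)
    (hb : b ≤ 0) (ha : γ₁ a = γ₂ a) : γ₁ b = γ₂ b :=
  ODE_solution_unique_of_mem_Icc_right (v := fun _ => f) (s := fun _ => D) (fun _ _ => hf)
    (HasDerivAt.continuousOn fun t ht => (h₁ t (ht.2.trans hb)).2)
    (fun t ht => (h₁ t (ht.2.le.trans hb)).2.hasDerivWithinAt)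
    (fun t ht => (h₁ t (ht.2.le.trans hb)).1)
    (HasDerivAt.continuousOn fun t ht => (h₂ t (ht.2.trans hb)).2)
    (fun t ht => (h₂ t (ht.2.le.trans hb)).2.hasDerivWithinAt)
    (fun t ht => (h₂ t (ht.2.le.trans hb)).1) ha ⟨hab, le_rfl⟩

section BackwardOrbits

variable {u s : ℕ} {f : Esp u × Esp s → Esp u × Esp s} {D : Set (Esp u × Esp s)} {L : ℝ}
  {γ₁ γ₂ : ℝ → Esp u × Esp s}

theorem IsBackwardOrbit.hasDerivAt_sub (h₁ : IsBackwardOrbit f D γ₁)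
    (h₂ : IsBackwardOrbit f D γ₂) {t : ℝ} (ht : t ≤ 0) :
    HasDerivAt (fun τ => γ₁ τ - γ₂ τ) (f (γ₁ t) - f (γ₂ t)) t :=
  (h₁ t ht).2.sub (h₂ t ht).2

theorem IsBackwardOrbit.lt_norm_snd_sub_of_le (hf : ContDiff ℝ 1 f) (hDc : IsCompact D)
    (hDv : Convex ℝ D) (hL : 0 < L) (hmuxi : muArrow L f D < xiArrow L f D)
    (h₁ : IsBackwardOrbit f D γ₁) (h₂ : IsBackwardOrbit f D γ₂) {t₀ : ℝ} (ht₀ : t₀ ≤ 0)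
    (hout : L * ‖(γ₁ t₀ - γ₂ t₀).1‖ < ‖(γ₁ t₀ - γ₂ t₀).2‖) :
    ∀ a ≤ t₀, L * ‖(γ₁ a - γ₂ a).1‖ < ‖(γ₁ a - γ₂ a).2‖ := by
  obtain ⟨K, hK⟩ := hf.locallyLipschitz.locallyLipschitzOn.exists_lipschitzOnWith_of_compact hDc
  have hsep : ∀ τ ≤ t₀, γ₁ τ ≠ γ₂ τ := fun τ hτ heq => by
    simp [h₁.eq_of_eq h₂ hK hτ ht₀ heq] at hout
  set V : ℝ → ℝ := fun τ => ‖(γ₁ τ - γ₂ τ).2‖ ^ 2 - L ^ 2 * ‖(γ₁ τ - γ₂ τ).1‖ ^ 2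
  have hV : ∀ τ ≤ 0, HasDerivAt V (2 * ⟪(γ₁ τ - γ₂ τ).2, (f (γ₁ τ) - f (γ₂ τ)).2⟫ -
      L ^ 2 * (2 * ⟪(γ₁ τ - γ₂ τ).1, (f (γ₁ τ) - f (γ₂ τ)).1⟫)) τ := fun τ hτ =>
    (h₁.hasDerivAt_sub h₂ hτ).norm_sq_snd.sub ((h₁.hasDerivAt_sub h₂ hτ).norm_sq_fst.const_mul _)
  have hVpos : ∀ τ, 0 < V τ ↔ L * ‖(γ₁ τ - γ₂ τ).1‖ < ‖(γ₁ τ - γ₂ τ).2‖ := fun τ => by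
    rw [← pow_lt_pow_iff_left₀ (by positivity) (norm_nonneg _) two_ne_zero, mul_pow, sub_pos]
  intro a ha
  rw [← hVpos]
  by_contra! hVa
  refine (hVpos t₀).2 hout |>.not_ge <| image_le_of_deriv_right_lt_deriv_boundary
    (HasDerivAt.continuousOn fun x hx => hV x (hx.2.trans ht₀))
    (fun x hx => (hV x (hx.2.le.trans ht₀)).hasDerivWithinAt) hVa
    (fun _ => hasDerivAt_const _ (0 : ℝ)) (fun x hx hVx => ?_) ⟨ha, le_rfl⟩
  have hx0 : x ≤ 0 := hx.2.le.trans ht₀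
  have hbd : ‖(γ₁ x - γ₂ x).2‖ = L * ‖(γ₁ x - γ₂ x).1‖ := by
    rw [← pow_left_inj₀ (norm_nonneg _) (by positivity) two_ne_zero, mul_pow]
    exact sub_eq_zero.1 hVx
  have := inner_snd_sub_sq_mul_inner_fst_neg hf hDc hDv hL hmuxi (h₁ x hx0).1 (h₂ x hx0).1
    (hsep x hx.2.le) hbd
  linarith

theorem IsBackwardOrbit.norm_snd_sub_le (hf : ContDiff ℝ 1 f) (hDc : IsCompact D)
    (hDv : Convex ℝ D) (hL : 0 < L) (hmu : muArrow L f D < 0)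
    (hmuxi : muArrow L f D < xiArrow L f D) (h₁ : IsBackwardOrbit f D γ₁)
    (h₂ : IsBackwardOrbit f D γ₂) : ∀ t ≤ 0, ‖(γ₁ t - γ₂ t).2‖ ≤ L * ‖(γ₁ t - γ₂ t).1‖ := by
  intro t₀ ht₀
  by_contra! hout
  have hext := h₁.lt_norm_snd_sub_of_le hf hDc hDv hL hmuxi h₂ ht₀ hout
  have hbdd : BddAbove ((fun τ => ‖(γ₁ τ - γ₂ τ).2‖ ^ 2) '' Iic t₀) := by
    refine ⟨Metric.diam D ^ 2, ?_⟩
    rintro _ ⟨τ, hτ, rfl⟩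
    have hτ₀ := hτ.trans ht₀
    exact pow_le_pow_left₀ (norm_nonneg _) ((norm_snd_le _).trans (dist_eq_norm (γ₁ τ) (γ₂ τ) ▸
      Metric.dist_le_diam_of_mem hDc.isBounded (h₁ τ hτ₀).1 (h₂ τ hτ₀).1)) 2
  have hzero := nonpos_of_hasDerivAt_le_mul_of_bddAbove (by linarith : 2 * muArrow L f D < 0)
    (fun τ hτ => (h₁.hasDerivAt_sub h₂ (hτ.trans ht₀)).norm_sq_snd)
    (fun τ hτ => by
      have := inner_snd_le_muArrow_mul_sq hf hDc hDv hL (h₁ τ (hτ.trans ht₀)).1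
        (h₂ τ (hτ.trans ht₀)).1 (hext τ hτ).le
      linarith) hbdd
  have : 0 ≤ L * ‖(γ₁ t₀ - γ₂ t₀).1‖ := by positivity
  nlinarith

theorem IsBackwardOrbit.norm_fst_sub_le_exp_mul (hf : ContDiff ℝ 1 f) (hDc : IsCompact D)
    (hDv : Convex ℝ D) (h₁ : IsBackwardOrbit f D γ₁) (h₂ : IsBackwardOrbit f D γ₂)
    (hcone : ∀ t ≤ 0, ‖(γ₁ t - γ₂ t).2‖ ≤ L * ‖(γ₁ t - γ₂ t).1‖) {t : ℝ} (ht : 0 ≤ t) :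
    ‖(γ₁ (-t) - γ₂ (-t)).1‖ ≤ Real.exp (-xiArrow L f D * t) * ‖(γ₁ 0 - γ₂ 0).1‖ := by
  have h := norm_le_exp_mul_norm_of_mul_sq_le_inner (ζ := fun τ => (γ₁ τ - γ₂ τ).1)
    (by linarith : -t ≤ 0)
    (fun x hx => hasFDerivAt_fst.comp_hasDerivAt x (h₁.hasDerivAt_sub h₂ hx.2))
    (fun x hx => xiArrow_mul_sq_le_inner_fst hf hDc hDv (h₁ x hx.2).1 (h₂ x hx.2).1 (hcone x hx.2))
  rwa [zero_sub, neg_neg] at h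

end BackwardOrbits

theorem unstable_manifold_backward_contraction_general {u s : ℕ} (R L : ℝ)
    (hL : 0 < L)
    (f : Esp u × Esp s → Esp u × Esp s) (hf : ContDiff ℝ 1 f)
    (D : Set (Esp u × Esp s))
    (hD : D = closedBall (0 : Esp u) R ×ˢ closedBall (0 : Esp s) R)
    (hmu : muArrow L f D < 0) (hxi : 0 < xiArrow L f D) :
    ∀ γ₁ γ₂ : ℝ → Esp u × Esp s,
      (∀ t : ℝ, t ≤ 0 → γ₁ t ∈ D ∧ HasDerivAt γ₁ (f (γ₁ t)) t) →
      (∀ t : ℝ, t ≤ 0 → γ₂ t ∈ D ∧ HasDerivAt γ₂ (f (γ₂ t)) t) →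
      ∀ t : ℝ, 0 ≤ t →
        ‖γ₁ (-t) - γ₂ (-t)‖ ≤
          2 * Real.sqrt (1 + L ^ 2) * Real.exp (-(xiArrow L f D) * t) *
            ‖(γ₁ 0).1 - (γ₂ 0).1‖ := by
  intro γ₁ γ₂ h₁ h₂ t ht
  have hDc : IsCompact D := hD ▸ (isCompact_closedBall _ _).prod (isCompact_closedBall _ _)
  have hDv : Convex ℝ D := hD ▸ (convex_closedBall _ _).prod (convex_closedBall _ _)
  have hcone := IsBackwardOrbit.norm_snd_sub_le hf hDc hDv hL hmu (hmu.trans hxi) h₁ h₂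
  have hfst := IsBackwardOrbit.norm_fst_sub_le_exp_mul hf hDc hDv h₁ h₂ hcone ht
  have hnonneg : 0 ≤ √(1 + L ^ 2) * (Real.exp (-xiArrow L f D * t) * ‖(γ₁ 0 - γ₂ 0).1‖) := by
    positivity
  calc ‖γ₁ (-t) - γ₂ (-t)‖ ≤ √(1 + L ^ 2) * ‖(γ₁ (-t) - γ₂ (-t)).1‖ :=
        Prod.norm_le_sqrt_one_add_sq_mul_norm_fst (hcone (-t) (by linarith))
    _ ≤ √(1 + L ^ 2) * (Real.exp (-xiArrow L f D * t) * ‖(γ₁ 0 - γ₂ 0).1‖) := by gcongr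
    _ ≤ _ := by rw [← Prod.fst_sub]; linarith

/-- **Theorem (backward contraction rate on the unstable manifold).**
Under the hypotheses of the unstable-manifold theorem, for any two points
`p₁, p₂ ∈ Wᵘ` with corresponding backward solutions `γ₁, γ₂ : (-∞,0] → D`,
`‖γ₁(-t) - γ₂(-t)‖ ≤ c e^{-ξ⃗ t} ‖π_x(p₁ - p₂)‖` for all `t ≥ 0`, with
`c = 2√(1 + L²)`. -/
theorem unstable_manifold_backward_contraction {u s : ℕ} (R L : ℝ) (hR : 0 < R)
    (hL : 0 < L)
    (f : Esp u × Esp s → Esp u × Esp s) (hf : ContDiff ℝ 1 f)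
    (D : Set (Esp u × Esp s))
    (hD : D = closedBall (0 : Esp u) R ×ˢ closedBall (0 : Esp s) R)
    (hmu : muArrow L f D < 0) (hxi : 0 < xiArrow L f D)
    (hiso1 : ∀ q : Esp u × Esp s, q ∈ sphere (0 : Esp u) R ×ˢ closedBall (0 : Esp s) R →
      0 < (inner ℝ ((f q).1) q.1 : ℝ))
    (hiso2 : ∀ q : Esp u × Esp s, q ∈ closedBall (0 : Esp u) R ×ˢ sphere (0 : Esp s) R →
      (inner ℝ ((f q).2) q.2 : ℝ) < 0) :
    ∀ γ₁ γ₂ : ℝ → Esp u × Esp s,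
      (∀ t : ℝ, t ≤ 0 → γ₁ t ∈ D ∧ HasDerivAt γ₁ (f (γ₁ t)) t) →
      (∀ t : ℝ, t ≤ 0 → γ₂ t ∈ D ∧ HasDerivAt γ₂ (f (γ₂ t)) t) →
      ∀ t : ℝ, 0 ≤ t →
        ‖γ₁ (-t) - γ₂ (-t)‖ ≤
          2 * Real.sqrt (1 + L ^ 2) * Real.exp (-(xiArrow L f D) * t) *
            ‖(γ₁ 0).1 - (γ₂ 0).1‖ :=
  unstable_manifold_backward_contraction_general R L hL f hf D hD hmu hxi
end

section
/- Suppose that h(a_l) < 0 and h(a_r) > 0. Then there exists ψ ∈ A = [a_l, a_r] for which the system p' = f(p, ψ) has a homoclinic orbit to p*_ψ: a solution γ : ℝ → ℝ³ with γ not identically equal to p*_ψ and lim_{t→−∞} γ(t) = p*_ψ = lim_{t→+∞} γ(t). -/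
/-!
By the intermediate value theorem `h ψ = 0` for some `ψ ∈ A`. Then `pᵘ_ψ` lies on the local
unstable manifold, so its backward orbit tends to `p*_ψ`, while `Φ_T(pᵘ_ψ, ψ)` lies on the graph
of `wˢ_ψ`, i.e. on the local stable manifold, so its forward orbit tends to `p*_ψ`. Concatenating
the two trajectories at time `T` gives the homoclinic orbit; it is not constant because
`pᵘ_ψ` lies on the face `x = R` of `D`, whereas `p*_ψ` lies in the interior of `D`.
-/

open Filter Set Metric Topology

section Gluing

variable {E : Type*} [NormedAddCommGroup E] [NormedSpace ℝ E]

theorem hasDerivAt_ite_le_of_forall_hasDerivAt {v : E → E} {g₁ g₂ : ℝ → E} {T : ℝ}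
    (h₁ : ∀ t, HasDerivAt g₁ (v (g₁ t)) t) (h₂ : ∀ t, HasDerivAt g₂ (v (g₂ t)) t)
    (hT : g₁ T = g₂ T) (t : ℝ) :
    HasDerivAt (fun s => if s ≤ T then g₁ s else g₂ s)
      (v (if t ≤ T then g₁ t else g₂ t)) t := by
  rcases lt_trichotomy t T with hlt | rfl | hgt
  · have hg : (fun s => if s ≤ T then g₁ s else g₂ s) =ᶠ[𝓝 t] g₁ := by
      filter_upwards [Iic_mem_nhds hlt] with s hs using if_pos hs
    rw [if_pos hlt.le]
    exact (h₁ t).congr_of_eventuallyEq hg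
  · have hleft :
        HasDerivWithinAt (fun s => if s ≤ t then g₁ s else g₂ s) (v (g₁ t)) (Iic t) t :=
      (h₁ t).hasDerivWithinAt.congr (fun s hs => if_pos hs) (if_pos le_rfl)
    have hright :
        HasDerivWithinAt (fun s => if s ≤ t then g₁ s else g₂ s) (v (g₁ t)) (Ici t) t := by
      refine hT ▸ (h₂ t).hasDerivWithinAt.congr (fun s hs => ?_) (by simp [hT])
      rcases (mem_Ici.mp hs).eq_or_lt with rfl | hlt
      · simp [hT]
      · exact if_neg hlt.not_ge
    rw [if_pos le_rfl, ← hasDerivWithinAt_univ, ← Iic_union_Ici]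
    exact hleft.union hright
  · have hg : (fun s => if s ≤ T then g₁ s else g₂ s) =ᶠ[𝓝 t] g₂ := by
      filter_upwards [Ioi_mem_nhds hgt] with s hs using if_neg (not_le.mpr hs)
    rw [if_neg (not_le.mpr hgt)]
    exact (h₂ t).congr_of_eventuallyEq hg

/-- No group law `Φ_{s+t} = Φ_s ∘ Φ_t` is available, so the orbit is the concatenation of the
trajectories of `p` (up to time `T`) and of `Φ_T p` (restarted at time `T`). -/
theorem exists_homoclinic_of_tendsto_flow {v : E → E} {Φ : ℝ → E → E}
    (hΦ0 : ∀ p, Φ 0 p = p) (hΦ : ∀ p t, HasDerivAt (fun τ => Φ τ p) (v (Φ t p)) t)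
    {p e : E} {T : ℝ} (hT : 0 ≤ T) (hp : p ≠ e)
    (hu : Tendsto (fun t => Φ t p) atBot (𝓝 e))
    (hs : Tendsto (fun t => Φ t (Φ T p)) atTop (𝓝 e)) :
    ∃ γ : ℝ → E, (∀ t, HasDerivAt γ (v (γ t)) t) ∧ (¬ ∀ t, γ t = e) ∧
      Tendsto γ atBot (𝓝 e) ∧ Tendsto γ atTop (𝓝 e) := by
  refine ⟨fun t => if t ≤ T then Φ t p else Φ (t - T) (Φ T p),
    hasDerivAt_ite_le_of_forall_hasDerivAt (hΦ p)
      (fun t => (hΦ (Φ T p) (t - T)).comp_sub_const t T) (by simp [hΦ0]),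
    fun h => hp ?_, ?_, ?_⟩
  · simpa [hT, hΦ0] using h 0
  · refine hu.congr' ?_
    filter_upwards [eventually_le_atBot T] with t ht using (if_pos ht).symm
  · refine (hs.comp (tendsto_atTop_add_const_right atTop (-T) tendsto_id)).congr' ?_
    filter_upwards [eventually_gt_atTop T] with t ht using (if_neg ht.not_ge).symm

end Gluing

theorem fst_lt_of_mem_interior_Icc_prod {β : Type*} [TopologicalSpace β] {a b : ℝ} {s : Set β}
    {p : ℝ × β} (hp : p ∈ interior (Icc a b ×ˢ s)) : p.1 < b := by
  rw [interior_prod_eq, interior_Icc] at hp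
  exact hp.1.2

theorem homoclinic_from_sign_change_general (al ar R T : ℝ) (hal : al ≤ ar) (hR : 0 < R)
    (hT : 0 < T)
    (f : (ℝ × EuclideanSpace ℝ (Fin 2)) → ℝ → (ℝ × EuclideanSpace ℝ (Fin 2)))
    (Φ : ℝ → (ℝ × EuclideanSpace ℝ (Fin 2)) → ℝ → (ℝ × EuclideanSpace ℝ (Fin 2)))
    (hΦ0 : ∀ p a, Φ 0 p a = p)
    (hΦ : ∀ (p : ℝ × EuclideanSpace ℝ (Fin 2)) (a t : ℝ),
      HasDerivAt (fun τ => Φ τ p a) (f (Φ t p a) a) t)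
    (pstar : ℝ → ℝ × EuclideanSpace ℝ (Fin 2))
    (D : Set (ℝ × EuclideanSpace ℝ (Fin 2)))
    (hD : D = Set.Icc (-R) R ×ˢ closedBall (0 : EuclideanSpace ℝ (Fin 2)) R)
    (hpstarD : ∀ a ∈ Set.Icc al ar, pstar a ∈ interior D)
    (wu : ℝ → ℝ → EuclideanSpace ℝ (Fin 2))
    (ws : ℝ → EuclideanSpace ℝ (Fin 2) → ℝ)
    (hwu_graph : ∀ a ∈ Set.Icc al ar,
      {p | p ∈ D ∧ (∀ t : ℝ, t ≤ 0 → Φ t p a ∈ D) ∧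
          Tendsto (fun t => Φ t p a) atBot (nhds (pstar a))}
        = {p | ∃ x ∈ Set.Icc (-R) R, p = (x, wu a x)})
    (hws_graph : ∀ a ∈ Set.Icc al ar,
      {p | p ∈ D ∧ (∀ t : ℝ, 0 ≤ t → Φ t p a ∈ D) ∧
          Tendsto (fun t => Φ t p a) atTop (nhds (pstar a))}
        = {p | ∃ y ∈ closedBall (0 : EuclideanSpace ℝ (Fin 2)) R, p = (ws a y, y)})
    (hreturn : ∀ a ∈ Set.Icc al ar, Φ T (R, wu a R) a ∈ D)
    (h : ℝ → ℝ)
    (hdef : ∀ a ∈ Set.Icc al ar,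
      h a = (Φ T (R, wu a R) a).1 - ws a (Φ T (R, wu a R) a).2)
    (hcont : ContinuousOn h (Set.Icc al ar))
    (hhl : h al < 0) (hhr : h ar > 0) :
    ∃ ψ ∈ Set.Icc al ar, ∃ γ : ℝ → ℝ × EuclideanSpace ℝ (Fin 2),
      (∀ t : ℝ, HasDerivAt γ (f (γ t) ψ) t) ∧
      (¬ ∀ t : ℝ, γ t = pstar ψ) ∧
      Tendsto γ atBot (nhds (pstar ψ)) ∧
      Tendsto γ atTop (nhds (pstar ψ)) := by
  obtain ⟨ψ, hψA, hψ0⟩ := intermediate_value_Icc hal hcont ⟨hhl.le, hhr.le⟩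
  have hu : Tendsto (fun t => Φ t (R, wu ψ R) ψ) atBot (𝓝 (pstar ψ)) := by
    have hmem : ((R, wu ψ R) : ℝ × EuclideanSpace ℝ (Fin 2)) ∈ {p | p ∈ D ∧
        (∀ t : ℝ, t ≤ 0 → Φ t p ψ ∈ D) ∧ Tendsto (fun t => Φ t p ψ) atBot (𝓝 (pstar ψ))} :=
      hwu_graph ψ hψA ▸ ⟨R, ⟨by linarith, le_rfl⟩, rfl⟩
    exact hmem.2.2
  have hs : Tendsto (fun t => Φ t (Φ T (R, wu ψ R) ψ) ψ) atTop (𝓝 (pstar ψ)) := by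
    set q := Φ T (R, wu ψ R) ψ
    have hqD : q ∈ D := hreturn ψ hψA
    rw [hD] at hqD
    have hmem : q ∈ {p | p ∈ D ∧
        (∀ t : ℝ, 0 ≤ t → Φ t p ψ ∈ D) ∧ Tendsto (fun t => Φ t p ψ) atTop (𝓝 (pstar ψ))} :=
      hws_graph ψ hψA ▸ ⟨q.2, hqD.2, Prod.ext (by linarith [hdef ψ hψA]) rfl⟩
    exact hmem.2.2
  have hne : ((R, wu ψ R) : ℝ × EuclideanSpace ℝ (Fin 2)) ≠ pstar ψ := by
    intro heq
    have hlt := fst_lt_of_mem_interior_Icc_prod (hD ▸ hpstarD ψ hψA)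
    exact hlt.ne (congrArg Prod.fst heq).symm
  exact ⟨ψ, hψA, exists_homoclinic_of_tendsto_flow (v := (f · ψ)) (Φ := fun t p => Φ t p ψ)
    (hΦ0 · ψ) (hΦ · ψ) hT.le hne hu hs⟩

/-- **Theorem (existence of a homoclinic orbit from a sign change of `h`).**
Setup: `f : ℝ³ × ℝ → ℝ³` is `C¹` (we write `ℝ³ = ℝ × ℝ²` with coordinates `(x,y)`),
`Φ_t(·, a)` is the flow of `p' = f(p,a)`, `p*_a` is a family of fixed points lying in
`int D`, `D = [-R,R] × B̄_s(R)`; for each `a ∈ A = [a_l, a_r]` the local unstable and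
stable manifolds of `p*_a` in `D` are graphs of functions `wᵘ_a : [-R,R] → B̄_s(R)` and
`wˢ_a : B̄_s(R) → [-R,R]` depending continuously on `a`; `pᵘ_a = (R, wᵘ_a(R))`, `T > 0`
with `Φ_T(pᵘ_a, a) ∈ D`, and `h(a) = π_x Φ_T(pᵘ_a,a) - wˢ_a(π_y Φ_T(pᵘ_a,a))` is
continuous.  If `h(a_l) < 0` and `h(a_r) > 0`, then there exists `ψ ∈ A` for which
`p' = f(p,ψ)` has a homoclinic orbit to `p*_ψ`. -/
theorem homoclinic_from_sign_change (al ar R T : ℝ) (hal : al ≤ ar) (hR : 0 < R)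
    (hT : 0 < T)
    (f : (ℝ × EuclideanSpace ℝ (Fin 2)) → ℝ → (ℝ × EuclideanSpace ℝ (Fin 2)))
    (hf : ContDiff ℝ 1 (fun q : (ℝ × EuclideanSpace ℝ (Fin 2)) × ℝ => f q.1 q.2))
    (Φ : ℝ → (ℝ × EuclideanSpace ℝ (Fin 2)) → ℝ → (ℝ × EuclideanSpace ℝ (Fin 2)))
    (hΦ0 : ∀ p a, Φ 0 p a = p)
    (hΦ : ∀ (p : ℝ × EuclideanSpace ℝ (Fin 2)) (a t : ℝ),
      HasDerivAt (fun τ => Φ τ p a) (f (Φ t p a) a) t)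
    (pstar : ℝ → ℝ × EuclideanSpace ℝ (Fin 2))
    (hpstar_cont : ContinuousOn pstar (Set.Icc al ar))
    (hpstar_fix : ∀ a ∈ Set.Icc al ar, f (pstar a) a = 0)
    (D : Set (ℝ × EuclideanSpace ℝ (Fin 2)))
    (hD : D = Set.Icc (-R) R ×ˢ closedBall (0 : EuclideanSpace ℝ (Fin 2)) R)
    (hpstarD : ∀ a ∈ Set.Icc al ar, pstar a ∈ interior D)
    (wu : ℝ → ℝ → EuclideanSpace ℝ (Fin 2))
    (ws : ℝ → EuclideanSpace ℝ (Fin 2) → ℝ)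
    (hwu_cont : ContinuousOn (fun q : ℝ × ℝ => wu q.1 q.2)
      (Set.Icc al ar ×ˢ Set.Icc (-R) R))
    (hws_cont : ContinuousOn (fun q : ℝ × EuclideanSpace ℝ (Fin 2) => ws q.1 q.2)
      (Set.Icc al ar ×ˢ closedBall (0 : EuclideanSpace ℝ (Fin 2)) R))
    (hwu_graph : ∀ a ∈ Set.Icc al ar,
      {p | p ∈ D ∧ (∀ t : ℝ, t ≤ 0 → Φ t p a ∈ D) ∧
          Tendsto (fun t => Φ t p a) atBot (nhds (pstar a))}
        = {p | ∃ x ∈ Set.Icc (-R) R, p = (x, wu a x)})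
    (hws_graph : ∀ a ∈ Set.Icc al ar,
      {p | p ∈ D ∧ (∀ t : ℝ, 0 ≤ t → Φ t p a ∈ D) ∧
          Tendsto (fun t => Φ t p a) atTop (nhds (pstar a))}
        = {p | ∃ y ∈ closedBall (0 : EuclideanSpace ℝ (Fin 2)) R, p = (ws a y, y)})
    (hreturn : ∀ a ∈ Set.Icc al ar, Φ T (R, wu a R) a ∈ D)
    (h : ℝ → ℝ)
    (hdef : ∀ a ∈ Set.Icc al ar,
      h a = (Φ T (R, wu a R) a).1 - ws a (Φ T (R, wu a R) a).2)
    (hcont : ContinuousOn h (Set.Icc al ar))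
    (hhl : h al < 0) (hhr : h ar > 0) :
    ∃ ψ ∈ Set.Icc al ar, ∃ γ : ℝ → ℝ × EuclideanSpace ℝ (Fin 2),
      (∀ t : ℝ, HasDerivAt γ (f (γ t) ψ) t) ∧
      (¬ ∀ t : ℝ, γ t = pstar ψ) ∧
      Tendsto γ atBot (nhds (pstar ψ)) ∧
      Tendsto γ atTop (nhds (pstar ψ)) :=
  homoclinic_from_sign_change_general al ar R T hal hR hT f Φ hΦ0 hΦ pstar D hD hpstarD wu ws
    hwu_graph hws_graph hreturn h hdef hcont hhl hhr
end

section
/- Let B : ℝ → M₃(ℝ) be continuous and let ξ₁, ξ₂ : ℝ → ℝ³ be differentiable curves satisfying ξᵢ'(t) = B(t)·ξᵢ(t) for i = 1, 2. Then the cross product η(t) = ξ₁(t) × ξ₂(t) satisfies the linear ODE η'(t) = −(B(t)ᵀ − tr(B(t))·I)·η(t), where I is the 3×3 identity matrix and tr denotes the trace. -/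
open Matrix

/-- The linearization at `ε = 0` of `(Au) ⨯₃ (Av) = (adj A)ᵀ (u ⨯₃ v)` for `A = 1 + εM`. -/
theorem crossProduct_mulVec_add_crossProduct_mulVec {R : Type*} [CommRing R]
    (M : Matrix (Fin 3) (Fin 3) R) (u v : Fin 3 → R) :
    (M *ᵥ u) ⨯₃ v + u ⨯₃ (M *ᵥ v) = (M.trace • 1 - Mᵀ) *ᵥ (u ⨯₃ v) := by
  ext i
  fin_cases i <;>
    simp [cross_apply, mulVec, dotProduct, Fin.sum_univ_three, trace, one_apply] <;> ring

theorem HasDerivAt.crossProduct {𝕜 : Type*} [NontriviallyNormedField 𝕜] [CompleteSpace 𝕜]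
    {f g : 𝕜 → Fin 3 → 𝕜} {f' g' : Fin 3 → 𝕜} {x : 𝕜}
    (hf : HasDerivAt f f' x) (hg : HasDerivAt g g' x) :
    HasDerivAt (fun y => f y ⨯₃ g y) (f' ⨯₃ g x + f x ⨯₃ g') x := by
  simpa [add_comm] using
    (_root_.crossProduct (R := 𝕜)).toContinuousBilinearMap.hasDerivAt_of_bilinear (fun _ => hf)
      (fun _ => hg)

theorem crossProduct_solution_ode_general (B : ℝ → Matrix (Fin 3) (Fin 3) ℝ)
    (ξ₁ ξ₂ : ℝ → Fin 3 → ℝ)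
    (h1 : ∀ t : ℝ, HasDerivAt ξ₁ ((B t).mulVec (ξ₁ t)) t)
    (h2 : ∀ t : ℝ, HasDerivAt ξ₂ ((B t).mulVec (ξ₂ t)) t) :
    ∀ t : ℝ,
      HasDerivAt (fun τ => crossProduct (ξ₁ τ) (ξ₂ τ))
        (-(((B t).transpose - (B t).trace • (1 : Matrix (Fin 3) (Fin 3) ℝ)).mulVec
            (crossProduct (ξ₁ t) (ξ₂ t)))) t := by
  intro t
  rw [← neg_mulVec, neg_sub, ← crossProduct_mulVec_add_crossProduct_mulVec]
  exact (h1 t).crossProduct (h2 t)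

/-- **Lemma (ODE for the cross product of two solutions of a linear system).**
If `ξ₁, ξ₂ : ℝ → ℝ³` satisfy `ξᵢ' = B(t)ξᵢ` with `B : ℝ → M₃(ℝ)` continuous, then
`η(t) = ξ₁(t) × ξ₂(t)` satisfies `η' = -(B(t)ᵀ - tr(B(t))·I) η`. -/
theorem crossProduct_solution_ode (B : ℝ → Matrix (Fin 3) (Fin 3) ℝ)
    (hB : Continuous B)
    (ξ₁ ξ₂ : ℝ → Fin 3 → ℝ)
    (h1 : ∀ t : ℝ, HasDerivAt ξ₁ ((B t).mulVec (ξ₁ t)) t)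
    (h2 : ∀ t : ℝ, HasDerivAt ξ₂ ((B t).mulVec (ξ₂ t)) t) :
    ∀ t : ℝ,
      HasDerivAt (fun τ => crossProduct (ξ₁ τ) (ξ₂ τ))
        (-(((B t).transpose - (B t).trace • (1 : Matrix (Fin 3) (Fin 3) ℝ)).mulVec
            (crossProduct (ξ₁ t) (ξ₂ t)))) t :=
  crossProduct_solution_ode_general B ξ₁ ξ₂ h1 h2
end
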